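/- arXiv:2603.01200 — 2 statements merged into one kernel-verified Lean document; each statement's English description precedes it below -/
import Mathlib

section
/- Let K̃ ⊂ ℝⁿ be compact and ρ > 0. Then there exists a class-𝒦∞ function α : [0,∞) → [0,∞) such that for every k ∈ ℕ, every x̃ ∈ K̃, and every η ∈ [−ρ, ρ]: | F̆_k(x̃) − b ∫_{[0,1]^{n−1}} J(x̃ + a φ(2Θ(z))) g(2Θ(z)) φ(2Θ(z)) dz | ≤ 1/(2 α(k)) and | Ĕ_k(η) + b η ∫_{[0,1]^{n−1}} g(2Θ(z)) φ(2Θ(z)) dz | ≤ 1/(2 α(k)). -/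
open MeasureTheory Real Set Filter

noncomputable section

/-- The spherical parametrization `φ : ℝ^{n-1} → ℝⁿ` (angles given as `θ : ℕ → ℝ`;
only the entries `θ 0, …, θ (n-2)` matter).  The first component is
`cos θ₀ ∏_{j=1}^{n-2} sin θ_j`, the second is `sin θ₀ ∏_{j=1}^{n-2} sin θ_j`, and for
`1 ≤ i ≤ n-2` the `(i+2)`-nd component (index `i+1`) is `cos θ_i ∏_{j=i+1}^{n-2} sin θ_j`. -/
def sphParam (n : ℕ) (θ : ℕ → ℝ) : EuclideanSpace ℝ (Fin n) := WithLp.toLp 2 fun m =>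
  if (m : ℕ) = 0 then Real.cos (θ 0) * ∏ j ∈ Finset.Ico 1 (n - 1), Real.sin (θ j)
  else if (m : ℕ) = 1 then Real.sin (θ 0) * ∏ j ∈ Finset.Ico 1 (n - 1), Real.sin (θ j)
  else Real.cos (θ ((m : ℕ) - 1)) * ∏ j ∈ Finset.Ico (m : ℕ) (n - 1), Real.sin (θ j)

/-- `g(θ) = ∏_{j=1}^{n-2} |sin θ_j|^j`, the square root of the Gram determinant of `φ`. -/
def gramG (n : ℕ) (θ : ℕ → ℝ) : ℝ := ∏ j ∈ Finset.Ico 1 (n - 1), |Real.sin (θ j)| ^ j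

/-- The angle dither `θ_k(τ) = (τ, 2^{k-1} τ, 2^{2k-1} τ, …, 2^{(n-2)k-1} τ)`. -/
def ditherAngle (k : ℕ) (τ : ℝ) : ℕ → ℝ := fun j =>
  if j = 0 then τ else 2 ^ (j * k - 1) * τ

/-- The dither signal `U_k = φ ∘ θ_k`. -/
def ditherU (n k : ℕ) (τ : ℝ) : EuclideanSpace ℝ (Fin n) := sphParam n (ditherAngle k τ)

/-- The dither signal `v_k(τ) = g(θ_k(τ)) U_k(τ)`. -/
def ditherV (n k : ℕ) (τ : ℝ) : EuclideanSpace ℝ (Fin n) :=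
  gramG n (ditherAngle k τ) • ditherU n k τ

/-- The closed unit ball `𝔹` of `ℝⁿ`. -/
def unitBall (n : ℕ) : Set (EuclideanSpace ℝ (Fin n)) := Metric.closedBall 0 1

/-- The volume `vol(𝔹)` of the closed unit ball. -/
def volB (n : ℕ) : ℝ := (volume (unitBall n)).toReal

/-- The averaged objective function `J̄_a(x) = (1/vol 𝔹) ∫_𝔹 J(x + aξ) dξ`. -/
def Jbar (n : ℕ) (J : EuclideanSpace ℝ (Fin n) → ℝ) (a : ℝ) (x : EuclideanSpace ℝ (Fin n)) : ℝ :=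
  (volB n)⁻¹ * ∫ ξ in unitBall n, J (x + a • ξ)

/-- The surface measure `λ_{∂𝔹}` on the unit sphere of `ℝⁿ`. -/
def sphereMeasure (n : ℕ) : Measure (Metric.sphere (0 : EuclideanSpace ℝ (Fin n)) 1) :=
  (volume : Measure (EuclideanSpace ℝ (Fin n))).toSphere

/-- The constant `c = vol(𝔹)/(2π^{n-1})`. -/
def cConst (n : ℕ) : ℝ := volB n / (2 * π ^ (n - 1))

/-- The averaged vector field `F̆_k(x) = (b/2π) ∫₀^{2π} J(x + a φ(θ_k τ)) g(θ_k τ) φ(θ_k τ) dτ`. -/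
def Fbreve (n : ℕ) (J : EuclideanSpace ℝ (Fin n) → ℝ) (a b : ℝ) (k : ℕ)
    (x : EuclideanSpace ℝ (Fin n)) : EuclideanSpace ℝ (Fin n) :=
  (b / (2 * π)) • ∫ τ in (0:ℝ)..(2 * π),
    (J (x + a • sphParam n (ditherAngle k τ)) * gramG n (ditherAngle k τ)) •
      sphParam n (ditherAngle k τ)

/-- The averaged map `Ĕ_k(η) = -(b/2π) η ∫₀^{2π} g(θ_k τ) φ(θ_k τ) dτ`. -/
def Ebreve (n : ℕ) (b : ℝ) (k : ℕ) (η : ℝ) : EuclideanSpace ℝ (Fin n) :=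
  (-(b / (2 * π)) * η) •
    ∫ τ in (0:ℝ)..(2 * π), gramG n (ditherAngle k τ) • sphParam n (ditherAngle k τ)

/-- A (locally absolutely continuous) solution, in integral form, of the transformed
closed-loop system `x̃' = (J(x̃ + a U_k(ωt)) - η + d t)·b·v_k(ωt)`,
`η' = -h η + h J(x̃ + a U_k(ωt)) + h d t` on the interval `I`. -/
def IsTransSol (n : ℕ) (J : EuclideanSpace ℝ (Fin n) → ℝ) (a b h ω : ℝ) (k : ℕ)
    (d : ℝ → ℝ) (I : Set ℝ) (x : ℝ → EuclideanSpace ℝ (Fin n)) (η : ℝ → ℝ) : Prop :=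
  I.OrdConnected ∧ ContinuousOn x I ∧ ContinuousOn η I ∧
  ∀ t₀ ∈ I, ∀ t₁ ∈ I,
    IntervalIntegrable (fun s =>
      ((J (x s + a • ditherU n k (ω * s)) - η s + d s) * b) • ditherV n k (ω * s))
      volume t₀ t₁ ∧
    IntervalIntegrable (fun s =>
      -h * η s + h * J (x s + a • ditherU n k (ω * s)) + h * d s) volume t₀ t₁ ∧
    x t₁ = x t₀ + ∫ s in t₀..t₁,
      ((J (x s + a • ditherU n k (ω * s)) - η s + d s) * b) • ditherV n k (ω * s) ∧
    η t₁ = η t₀ + ∫ s in t₀..t₁,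
      (-h * η s + h * J (x s + a • ditherU n k (ω * s)) + h * d s)

/-- A (locally absolutely continuous) solution, in integral form, of the gradient system
`x̄' = κ ∇J̄_a(x̄) + f t` on the interval `I`. -/
def IsGradSol (n : ℕ) (J : EuclideanSpace ℝ (Fin n) → ℝ) (a κ : ℝ)
    (f : ℝ → EuclideanSpace ℝ (Fin n)) (I : Set ℝ)
    (x : ℝ → EuclideanSpace ℝ (Fin n)) : Prop :=
  I.OrdConnected ∧ ContinuousOn x I ∧
  ∀ t₀ ∈ I, ∀ t₁ ∈ I,
    IntervalIntegrable (fun s => κ • gradient (Jbar n J a) (x s) + f s) volume t₀ t₁ ∧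
    x t₁ = x t₀ + ∫ s in t₀..t₁, (κ • gradient (Jbar n J a) (x s) + f s)

/-- The unit cube `[0,1]^d`. -/
def cube (d : ℕ) : Set (EuclideanSpace ℝ (Fin d)) := {z | ∀ j, z j ∈ Icc (0:ℝ) 1}

/-- The curve `γ_k(σ) = (saw σ, saw (2^k σ), …, saw (2^{(d-1)k} σ))`,
where `saw` is the sawtooth wave `σ ↦ σ - ⌊σ⌋`. -/
def gammaCurve (d k : ℕ) (σ : ℝ) : EuclideanSpace ℝ (Fin d) :=
  WithLp.toLp 2 fun j => Int.fract (2 ^ ((j : ℕ) * k) * σ)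

/-- The modulus of continuity of `f` on `[0,1]^d` of order `ε`
(with respect to the Euclidean norm). -/
def modCont (d : ℕ) (f : EuclideanSpace ℝ (Fin d) → ℝ) (ε : ℝ) : ℝ :=
  sSup {r | ∃ z ∈ cube d, ∃ ζ ∈ cube d, ‖z - ζ‖ ≤ ε ∧ r = |f z - f ζ|}

/-- Extension of a `d`-tuple to a function `ℕ → ℝ` (by zero). -/
def padTo (d : ℕ) (z : EuclideanSpace ℝ (Fin d)) : ℕ → ℝ :=
  fun j => if h : j < d then z ⟨j, h⟩ else 0

/-- The map `Θ(z) = π (2 z₀, z₁, …, z_{n-2})`. -/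
def ThetaMap (z : ℕ → ℝ) : ℕ → ℝ := fun j => if j = 0 then 2 * π * z 0 else π * z j

/-- `W = (0,2π) × (0,π)^{n-2}`. -/
def Wset (n : ℕ) : Set (EuclideanSpace ℝ (Fin (n-1))) :=
  {θ | ∀ j : Fin (n-1), θ j ∈ Ioo 0 (if (j : ℕ) = 0 then 2 * π else π)}

/-- `2W = (0,4π) × (0,2π)^{n-2}`. -/
def W2set (n : ℕ) : Set (EuclideanSpace ℝ (Fin (n-1))) :=
  {θ | ∀ j : Fin (n-1), θ j ∈ Ioo 0 (if (j : ℕ) = 0 then 4 * π else 2 * π)}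

/-- A class-`𝒦` function: continuous and strictly increasing on `[0,∞)` with `γ 0 = 0`. -/
def IsClassK (γ : ℝ → ℝ) : Prop :=
  ContinuousOn γ (Ici 0) ∧ StrictMonoOn γ (Ici 0) ∧ γ 0 = 0

/-- A class-`𝒦∞` function. -/
def IsClassKInf (α : ℝ → ℝ) : Prop := IsClassK α ∧ Tendsto α atTop atTop

/-- A class-`𝒦ℒ` function. -/
def IsClassKL (β : ℝ → ℝ → ℝ) : Prop :=
  (∀ t ≥ (0 : ℝ), IsClassK fun s => β s t) ∧
  ∀ s ≥ (0 : ℝ), AntitoneOn (β s) (Ici 0) ∧ Tendsto (β s) atTop (nhds 0)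

/-- The `L∞` (essential supremum) norm of a function on `ℝ`. -/
def LinfNorm {F : Type*} [NormedAddCommGroup F] (d : ℝ → F) : ℝ :=
  (eLpNorm d ⊤ volume).toReal

/-- `d` is (a.e. strongly) measurable and essentially bounded with `‖d‖_∞ ≤ δ`. -/
def IsEssBdd {F : Type*} [NormedAddCommGroup F] (d : ℝ → F) (δ : ℝ) : Prop :=
  AEStronglyMeasurable d volume ∧ eLpNorm d ⊤ volume ≤ ENNReal.ofReal δ

set_option linter.unusedSectionVars false
set_option linter.unusedVariables false
set_option maxHeartbeats 2000000

namespace Stmt9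

variable {V : Type*} [NormedAddCommGroup V] [NormedSpace ℝ V] [CompleteSpace V]

/-- all-zero angle vector -/
def Z : ℕ → ℝ := fun _ => 0

/-- average over coordinate `j` on a `2π` period -/
def avg (j : ℕ) (Φ : (ℕ → ℝ) → V) : (ℕ → ℝ) → V :=
  fun θ => (2 * π)⁻¹ • ∫ s in (0:ℝ)..(2*π), Φ (Function.update θ j s)

/-- average over coordinate `j` on `[0,1]` -/
def cavg (j : ℕ) (Φ : (ℕ → ℝ) → V) : (ℕ → ℝ) → V :=
  fun θ => ∫ s in (0:ℝ)..1, Φ (Function.update θ j s)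

def avgFrom (Φ : (ℕ → ℝ) → V) : ℕ → ℕ → ((ℕ → ℝ) → V)
  | 0, _ => Φ
  | (m+1), j => avg j (avgFrom Φ m (j+1))

def cavgFrom (Φ : (ℕ → ℝ) → V) : ℕ → ℕ → ((ℕ → ℝ) → V)
  | 0, _ => Φ
  | (m+1), j => cavg j (cavgFrom Φ m (j+1))

def Bdd (M : ℝ) (Φ : (ℕ → ℝ) → V) : Prop := ∀ θ, ‖Φ θ‖ ≤ M

def Mod (d : ℕ) (δ ε : ℝ) (Φ : (ℕ → ℝ) → V) : Prop :=
  ∀ θ θ' : ℕ → ℝ, (∀ i < d, |θ i - θ' i| ≤ δ) → ‖Φ θ - Φ θ'‖ ≤ ε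

def UC (d : ℕ) (Φ : (ℕ → ℝ) → V) : Prop := ∀ ε > 0, ∃ δ > 0, Mod d δ ε Φ

def Per (j : ℕ) (Φ : (ℕ → ℝ) → V) : Prop :=
  ∀ θ s, Φ (Function.update θ j (s + 2*π)) = Φ (Function.update θ j s)

def DepLt (d : ℕ) (Φ : (ℕ → ℝ) → V) : Prop :=
  ∀ θ θ', (∀ i < d, θ i = θ' i) → Φ θ = Φ θ'

lemma uc_depLt {d : ℕ} {Φ : (ℕ → ℝ) → V} (h : UC d Φ) : DepLt d Φ := by
  intro θ θ' hag
  have : ∀ ε > 0, ‖Φ θ - Φ θ'‖ ≤ ε := by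
    intro ε hε
    obtain ⟨δ, hδ, hm⟩ := h ε hε
    exact hm θ θ' (fun i hi => by rw [hag i hi]; simpa using hδ.le)
  have h0 : ‖Φ θ - Φ θ'‖ ≤ 0 := le_of_forall_gt_imp_ge_of_dense (by
    intro ε hε; exact this ε hε)
  rw [← sub_eq_zero]
  exact norm_le_zero_iff.mp h0

lemma uc_continuous {d : ℕ} {Φ : (ℕ → ℝ) → V} (h : UC d Φ) : Continuous Φ := by
  rw [continuous_iff_continuousAt]
  intro θ₀
  rw [ContinuousAt, Metric.tendsto_nhds]
  intro ε hε
  obtain ⟨δ, hδ, hm⟩ := h (ε/2) (by linarith)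
  have hmem : (↑(Finset.range d) : Set ℕ).pi (fun i => Metric.ball (θ₀ i) δ) ∈ nhds θ₀ := by
    apply set_pi_mem_nhds (Finset.finite_toSet _)
    intro i _
    exact Metric.ball_mem_nhds _ hδ
  filter_upwards [hmem] with θ hθ
  have : ‖Φ θ - Φ θ₀‖ ≤ ε/2 := by
    apply hm
    intro i hi
    have := hθ i (by simpa using hi)
    simp only [Metric.mem_ball, Real.dist_eq] at this
    exact this.le
  calc dist (Φ θ) (Φ θ₀) = ‖Φ θ - Φ θ₀‖ := dist_eq_norm _ _
    _ ≤ ε/2 := this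
    _ < ε := by linarith

lemma curve_cont {d : ℕ} {Φ : (ℕ → ℝ) → V} (h : UC d Φ) {γ : ℝ → ℕ → ℝ}
    (hγ : ∀ i, Continuous fun t => γ t i) : Continuous fun t => Φ (γ t) :=
  (uc_continuous h).comp (continuous_pi hγ)

lemma curve_integrable {d : ℕ} {Φ : (ℕ → ℝ) → V} (h : UC d Φ) {γ : ℝ → ℕ → ℝ}
    (hγ : ∀ i, Continuous fun t => γ t i) (a b : ℝ) :
    IntervalIntegrable (fun t => Φ (γ t)) volume a b :=
  (curve_cont h hγ).intervalIntegrable a b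

lemma update_cont {θ : ℕ → ℝ} {j : ℕ} : ∀ i, Continuous fun s : ℝ => Function.update θ j s i := by
  intro i
  rcases eq_or_ne i j with rfl | hij
  · simpa [Function.update_apply] using continuous_id'
  · simpa [Function.update_apply, hij] using continuous_const

lemma mod_avg {d : ℕ} {δ ε : ℝ} {Φ : (ℕ → ℝ) → V} (hδ : 0 ≤ δ) (hε : 0 ≤ ε)
    (hUC : UC d Φ) (h : Mod d δ ε Φ) (j : ℕ) : Mod d δ ε (avg j Φ) := by
  intro θ θ' hag
  have h1 : IntervalIntegrable (fun s => Φ (Function.update θ j s)) volume 0 (2*π) :=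
    curve_integrable hUC update_cont 0 (2*π)
  have h2 : IntervalIntegrable (fun s => Φ (Function.update θ' j s)) volume 0 (2*π) :=
    curve_integrable hUC update_cont 0 (2*π)
  have key : avg j Φ θ - avg j Φ θ' =
      (2 * π)⁻¹ • ∫ s in (0:ℝ)..(2*π), (Φ (Function.update θ j s) - Φ (Function.update θ' j s)) := by
    rw [intervalIntegral.integral_sub h1 h2, smul_sub]
    rfl
  rw [key, norm_smul]
  have hb : ‖∫ s in (0:ℝ)..(2*π), (Φ (Function.update θ j s) - Φ (Function.update θ' j s))‖
      ≤ ε * |2*π - 0| := by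
    apply intervalIntegral.norm_integral_le_of_norm_le_const
    intro s _
    apply h
    intro i hi
    rcases eq_or_ne i j with rfl | hij
    · simpa using hδ
    · simpa [Function.update_apply, hij] using hag i hi
  have hπ : (0:ℝ) < 2 * π := by positivity
  calc ‖(2*π)⁻¹‖ * ‖∫ s in (0:ℝ)..(2*π), (Φ (Function.update θ j s) - Φ (Function.update θ' j s))‖
      ≤ (2*π)⁻¹ * (ε * (2*π)) := by
        apply mul_le_mul
        · rw [Real.norm_eq_abs, abs_of_pos (by positivity)]
        · simpa [abs_of_pos hπ] using hb
        · positivity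
        · positivity
    _ = ε := by field_simp
  
lemma bdd_avg {d : ℕ} {M : ℝ} {Φ : (ℕ → ℝ) → V} (hM : 0 ≤ M)
    (hUC : UC d Φ) (h : Bdd M Φ) (j : ℕ) : Bdd M (avg j Φ) := by
  intro θ
  have hb : ‖∫ s in (0:ℝ)..(2*π), Φ (Function.update θ j s)‖ ≤ M * |2*π - 0| :=
    intervalIntegral.norm_integral_le_of_norm_le_const (fun s _ => h _)
  have hπ : (0:ℝ) < 2 * π := by positivity
  rw [avg, norm_smul]
  calc ‖(2*π)⁻¹‖ * ‖∫ s in (0:ℝ)..(2*π), Φ (Function.update θ j s)‖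
      ≤ (2*π)⁻¹ * (M * (2*π)) := by
        apply mul_le_mul
        · rw [Real.norm_eq_abs, abs_of_pos (by positivity)]
        · simpa [abs_of_pos hπ] using hb
        · positivity
        · positivity
    _ = M := by field_simp

lemma uc_avg {d : ℕ} {Φ : (ℕ → ℝ) → V} (hUC : UC d Φ) (j : ℕ) : UC d (avg j Φ) := by
  intro ε hε
  obtain ⟨δ, hδ, hm⟩ := hUC ε hε
  exact ⟨δ, hδ, mod_avg hδ.le hε.le hUC hm j⟩

lemma per_avg {Φ : (ℕ → ℝ) → V} {i : ℕ} (h : Per i Φ) (j : ℕ) : Per i (avg j Φ) := by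
  intro θ s
  rcases eq_or_ne i j with rfl | hij
  · simp only [avg]
    congr 1
    apply intervalIntegral.integral_congr
    intro u _
    simp [Function.update_idem]
  · have e3 : ∀ u, Φ (Function.update (Function.update θ i (s + 2*π)) j u)
        = Φ (Function.update (Function.update θ i s) j u) := by
      intro u
      rw [Function.update_comm hij, Function.update_comm hij, h]
    simp only [avg]
    congr 1
    apply intervalIntegral.integral_congr
    intro u _
    exact e3 u

lemma dep_avg {Φ : (ℕ → ℝ) → V} {m : ℕ} (h : DepLt (m+1) Φ) (j : ℕ) (hj : j = m) :
    DepLt m (avg j Φ) := by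
  subst hj
  intro θ θ' hag
  simp only [avg]
  congr 1
  apply intervalIntegral.integral_congr
  intro u _
  apply h
  intro i hi
  rcases eq_or_ne i j with rfl | hij
  · simp
  · simp only [Function.update_apply, if_neg hij]
    exact hag i (by omega)

lemma dither_coord_cont (k : ℕ) : ∀ i, Continuous fun τ => ditherAngle k τ i := by
  intro i
  unfold ditherAngle
  rcases eq_or_ne i 0 with rfl | h
  · simpa using continuous_id'
  · simp only [if_neg h]
    exact continuous_const.mul continuous_id

/-- The key single-step averaging lemma. -/
lemma step {d j k : ℕ} {δ ε : ℝ} {Φ : (ℕ → ℝ) → V}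
    (hδ : 0 < δ) (hε : 0 ≤ ε) (hj : 1 ≤ j) (hjd : j + 1 ≤ d) (hk : 1 ≤ k)
    (hfreq : 4 * π / 2^k ≤ δ)
    (hUC : UC d Φ) (hmod : Mod d δ ε Φ) (hDep : DepLt (j+1) Φ) (hPer : Per j Φ) :
    ‖(∫ τ in (0:ℝ)..(2*π), Φ (ditherAngle k τ))
      - ∫ τ in (0:ℝ)..(2*π), (avg j Φ) (ditherAngle k τ)‖ ≤ 2*ε*(2*π) := by
  have hπ : (0:ℝ) < π := Real.pi_pos
  set N : ℕ := 2^(j*k-1) with hNdef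
  have hN : 0 < N := Nat.pow_pos (by norm_num)
  have hNr : (0:ℝ) < (N:ℝ) := by exact_mod_cast hN
  set t : ℕ → ℝ := fun i => (2*π/N) * i with htdef
  have ht0 : t 0 = 0 := by simp [htdef]
  have htN : t N = 2*π := by
    simp only [htdef]
    field_simp
  have htstep : ∀ i : ℕ, t (i+1) - t i = 2*π/N := by
    intro i; simp only [htdef]; push_cast; ring
  have htle : ∀ i : ℕ, t i ≤ t (i+1) := by
    intro i
    have h1 := htstep i
    have h2 : (0:ℝ) < 2*π/N := by positivity
    linarith
  have hAint : ∀ (a b : ℝ), IntervalIntegrable (fun τ => Φ (ditherAngle k τ)) volume a b :=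
    curve_integrable hUC (dither_coord_cont k)
  have hUCavg : UC d (avg j Φ) := uc_avg hUC j
  have hBint : ∀ (a b : ℝ), IntervalIntegrable (fun τ => (avg j Φ) (ditherAngle k τ)) volume a b :=
    curve_integrable hUCavg (dither_coord_cont k)
  set A : ℕ → V := fun i => ∫ τ in (t i)..(t (i+1)), Φ (ditherAngle k τ) with hAdef
  set B : ℕ → V := fun i => ∫ τ in (t i)..(t (i+1)), (avg j Φ) (ditherAngle k τ) with hBdef
  have hsplitA : ∑ i ∈ Finset.range N, A i = ∫ τ in (0:ℝ)..(2*π), Φ (ditherAngle k τ) := by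
    rw [intervalIntegral.sum_integral_adjacent_intervals (fun i _ => hAint _ _), ht0, htN]
  have hsplitB : ∑ i ∈ Finset.range N, B i
      = ∫ τ in (0:ℝ)..(2*π), (avg j Φ) (ditherAngle k τ) := by
    rw [intervalIntegral.sum_integral_adjacent_intervals (fun i _ => hBint _ _), ht0, htN]
  -- coordinate closeness on a subinterval
  have hcoord : ∀ (i : ℕ) (τ : ℝ), |τ - t i| ≤ 2*π/N → ∀ i', i' < j →
      |ditherAngle k τ i' - ditherAngle k (t i) i'| ≤ δ := by
    intro i τ hτ i' hi'
    rcases eq_or_ne i' 0 with rfl | hne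
    · show |τ - t i| ≤ δ
      -- |τ - t i| ≤ 2π/N ≤ 4π/2^k ≤ δ
      have hNat : 2^k ≤ N * 2 := by
        rw [hNdef, ← pow_succ]
        apply Nat.pow_le_pow_right (by norm_num)
        have : k ≤ j * k := Nat.le_mul_of_pos_left k hj
        omega
      have hstep : 2*π/N ≤ 4*π/2^k := by
        rw [div_le_div_iff₀ hNr (by positivity)]
        have h2 : ((2:ℝ)^k) ≤ (N:ℝ) * 2 := by exact_mod_cast hNat
        calc 2*π*2^k ≤ 2*π*((N:ℝ)*2) := by
              exact mul_le_mul_of_nonneg_left h2 (by positivity : (0:ℝ) ≤ 2*π)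
          _ = 4*π*(N:ℝ) := by ring
      linarith [hτ, hstep, hfreq]
    · have h1 : 1 ≤ i' := Nat.one_le_iff_ne_zero.mpr hne
      simp only [ditherAngle, if_neg hne]
      rw [← mul_sub, abs_mul]
      have habs2 : |(2:ℝ)^(i'*k-1)| = (2:ℝ)^(i'*k-1) := abs_of_pos (by positivity)
      rw [habs2]
      have hNat : 2^(i'*k-1) * 2^k ≤ N * 2 := by
        rw [hNdef, ← pow_add, ← pow_succ]
        apply Nat.pow_le_pow_right (by norm_num)
        have h3 : (i'+1) * k ≤ j * k := Nat.mul_le_mul_right k (by omega)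
        have h4 : 1*1 ≤ i' * k := Nat.mul_le_mul h1 hk
        have h5 : (i'+1)*k = i'*k + k := by ring
        omega
      have hstep : (2:ℝ)^(i'*k-1) * (2*π/N) ≤ 4*π/2^k := by
        have h2 : ((2:ℝ)^(i'*k-1) * 2^k) ≤ (N:ℝ) * 2 := by exact_mod_cast hNat
        have lhs_eq : (2:ℝ)^(i'*k-1) * (2*π/N) = ((2:ℝ)^(i'*k-1) * (2*π)) / N := by ring
        rw [lhs_eq, div_le_div_iff₀ hNr (by positivity : (0:ℝ) < 2^k)]
        calc (2:ℝ)^(i'*k-1) * (2*π) * 2^k = (2*π) * ((2:ℝ)^(i'*k-1) * 2^k) := by ring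
          _ ≤ (2*π) * ((N:ℝ)*2) :=
              mul_le_mul_of_nonneg_left h2 (by positivity : (0:ℝ) ≤ 2*π)
          _ = 4*π*(N:ℝ) := by ring
      calc (2:ℝ)^(i'*k-1) * |τ - t i| ≤ (2:ℝ)^(i'*k-1) * (2*π/N) := by
            apply mul_le_mul_of_nonneg_left hτ (by positivity)
        _ ≤ 4*π/2^k := hstep
        _ ≤ δ := hfreq
  -- per-subinterval estimate
  have hkey : ∀ i ∈ Finset.range N, ‖A i - B i‖ ≤ 2*ε*(2*π/N) := by
    intro i _
    set Fz : ℕ → ℝ := fun m => if m < j then ditherAngle k (t i) m else 0 with hFzdef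
    set C : V := ∫ τ in (t i)..(t (i+1)), Φ (Function.update Fz j ((N:ℝ) * τ)) with hCdef
    have hcurveC : ∀ i', Continuous fun τ : ℝ => Function.update Fz j ((N:ℝ)*τ) i' := by
      intro i'
      rcases eq_or_ne i' j with rfl | hne
      · simpa [Function.update_apply] using continuous_id'.const_mul (N:ℝ)
      · simpa [Function.update_apply, hne] using continuous_const
    have hCint : ∀ (a b : ℝ),
        IntervalIntegrable (fun τ => Φ (Function.update Fz j ((N:ℝ)*τ))) volume a b :=
      curve_integrable hUC hcurveC
    -- Claim A : ‖A i - C‖ ≤ ε * (2π/N)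
    have hAC : ‖A i - C‖ ≤ ε * (2*π/N) := by
      rw [hAdef, hCdef, ← intervalIntegral.integral_sub (hAint _ _) (hCint _ _)]
      have := intervalIntegral.norm_integral_le_of_norm_le_const
        (a := t i) (b := t (i+1)) (C := ε)
        (f := fun τ => Φ (ditherAngle k τ) - Φ (Function.update Fz j ((N:ℝ)*τ)))
        (by
          intro τ hτ
          show ‖Φ (ditherAngle k τ) - Φ (Function.update Fz j ((N:ℝ) * τ))‖ ≤ ε
          rw [Set.uIoc_of_le (htle i)] at hτ
          have hτ' : |τ - t i| ≤ 2*π/N := by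
            rw [abs_of_nonneg (by linarith [hτ.1])]
            linarith [hτ.2, htstep i]
          -- replace Φ (dither τ) by padded version
          have hpad : Φ (ditherAngle k τ) = Φ (fun m => if m < j+1 then ditherAngle k τ m else 0) := by
            apply hDep
            intro i' hi'
            simp [hi']
          rw [hpad]
          apply hmod
          intro i' hi'd
          rcases lt_trichotomy i' j with hlt | heq | hgt
          · have e1 : (if i' < j+1 then ditherAngle k τ i' else 0) = ditherAngle k τ i' := by
              simp [Nat.lt_succ_of_lt hlt]
            have e2 : Function.update Fz j ((N:ℝ)*τ) i' = ditherAngle k (t i) i' := by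
              rw [Function.update_apply, if_neg (by omega)]
              simp [hFzdef, hlt]
            rw [e1, e2]
            exact hcoord i τ hτ' i' hlt
          · subst heq
            have e1 : (if i' < i'+1 then ditherAngle k τ i' else 0) = (N:ℝ)*τ := by
              rw [if_pos (by omega)]
              have : i' ≠ 0 := by omega
              simp only [ditherAngle, if_neg this]
              rw [hNdef]; push_cast; ring
            have e2 : Function.update Fz i' ((N:ℝ)*τ) i' = (N:ℝ)*τ := by simp
            rw [e1, e2]
            simpa using hδ.le
          · have e1 : (if i' < j+1 then ditherAngle k τ i' else 0) = 0 := by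
              rw [if_neg (by omega)]
            have e2 : Function.update Fz j ((N:ℝ)*τ) i' = 0 := by
              rw [Function.update_apply, if_neg (by omega)]
              simp [hFzdef, show ¬ i' < j by omega]
            rw [e1, e2]
            simpa using hδ.le)
      calc ‖∫ τ in (t i)..(t (i+1)), (Φ (ditherAngle k τ) - Φ (Function.update Fz j ((N:ℝ)*τ)))‖
          ≤ ε * |t (i+1) - t i| := this
        _ = ε * (2*π/N) := by rw [htstep i, abs_of_pos (by positivity)]
    -- Claim C = (2π/N) • avg j Φ Fz
    have hCeq : C = (2*π/(N:ℝ)) • (avg j Φ Fz) := by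
      have hcomp : C = ((N:ℝ))⁻¹ • ∫ u in ((N:ℝ) * t i)..((N:ℝ) * t (i+1)),
          Φ (Function.update Fz j u) := by
        rw [hCdef]
        exact intervalIntegral.integral_comp_mul_left (fun u => Φ (Function.update Fz j u))
          (ne_of_gt hNr)
      have hendpoints : (N:ℝ) * t i = 2*π*i ∧ (N:ℝ) * t (i+1) = 2*π*i + 2*π := by
        constructor
        · simp only [htdef]; field_simp
        · simp only [htdef]; field_simp; push_cast; ring
      have hper : Function.Periodic (fun u => Φ (Function.update Fz j u)) (2*π) := by
        intro u
        exact hPer Fz u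
      have hshift : ∫ u in ((N:ℝ) * t i)..((N:ℝ) * t (i+1)), Φ (Function.update Fz j u)
          = ∫ u in (0:ℝ)..(2*π), Φ (Function.update Fz j u) := by
        rw [hendpoints.1, hendpoints.2]
        have := hper.intervalIntegral_add_eq (2*π*i) 0
        simpa using this
      rw [hcomp, hshift]
      have : (∫ u in (0:ℝ)..(2*π), Φ (Function.update Fz j u)) = (2*π) • avg j Φ Fz := by
        rw [avg, smul_smul]
        rw [mul_inv_cancel₀ (by positivity : (2*π:ℝ) ≠ 0), one_smul]
      rw [this, smul_smul]
      congr 1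
      field_simp
    -- Claim B : ‖C - B i‖ ≤ ε * (2π/N)
    have hCB : ‖C - B i‖ ≤ ε * (2*π/N) := by
      have hconst : C = ∫ τ in (t i)..(t (i+1)), avg j Φ Fz := by
        rw [intervalIntegral.integral_const, htstep i, hCeq]
      rw [hconst, hBdef, ← intervalIntegral.integral_sub (intervalIntegrable_const) (hBint _ _)]
      have hmodavg : Mod d δ ε (avg j Φ) := mod_avg hδ.le hε hUC hmod j
      have hdepavg : DepLt j (avg j Φ) := dep_avg (by
        intro θ θ' hag
        exact hDep θ θ' hag) j rfl
      have := intervalIntegral.norm_integral_le_of_norm_le_const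
        (a := t i) (b := t (i+1)) (C := ε)
        (f := fun τ => avg j Φ Fz - avg j Φ (ditherAngle k τ))
        (by
          intro τ hτ
          show ‖avg j Φ Fz - avg j Φ (ditherAngle k τ)‖ ≤ ε
          rw [Set.uIoc_of_le (htle i)] at hτ
          have hτ' : |τ - t i| ≤ 2*π/N := by
            rw [abs_of_nonneg (by linarith [hτ.1])]
            linarith [hτ.2, htstep i]
          have hpad : avg j Φ (ditherAngle k τ)
              = avg j Φ (fun m => if m < j then ditherAngle k τ m else 0) := by
            apply hdepavg
            intro i' hi'
            simp [hi']
          rw [hpad]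
          apply hmodavg
          intro i' hi'd
          rcases lt_or_ge i' j with hlt | hge
          · simp only [hFzdef, if_pos hlt]
            rw [abs_sub_comm]
            exact hcoord i τ hτ' i' hlt
          · simp only [hFzdef, if_neg (by omega : ¬ i' < j)]
            simpa using hδ.le)
      calc ‖∫ τ in (t i)..(t (i+1)), (avg j Φ Fz - avg j Φ (ditherAngle k τ))‖
          ≤ ε * |t (i+1) - t i| := this
        _ = ε * (2*π/N) := by rw [htstep i, abs_of_pos (by positivity)]
    calc ‖A i - B i‖ ≤ ‖A i - C‖ + ‖C - B i‖ := norm_sub_le_norm_sub_add_norm_sub _ _ _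
      _ ≤ ε * (2*π/N) + ε * (2*π/N) := add_le_add hAC hCB
      _ = 2*ε*(2*π/N) := by ring
  -- sum up
  calc ‖(∫ τ in (0:ℝ)..(2*π), Φ (ditherAngle k τ))
        - ∫ τ in (0:ℝ)..(2*π), (avg j Φ) (ditherAngle k τ)‖
      = ‖∑ i ∈ Finset.range N, (A i - B i)‖ := by
        rw [Finset.sum_sub_distrib, hsplitA, hsplitB]
    _ ≤ ∑ i ∈ Finset.range N, ‖A i - B i‖ := norm_sum_le _ _
    _ ≤ ∑ i ∈ Finset.range N, 2*ε*(2*π/N) := Finset.sum_le_sum hkey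
    _ = N * (2*ε*(2*π/N)) := by rw [Finset.sum_const, Finset.card_range, nsmul_eq_mul]
    _ = 2*ε*(2*π) := by field_simp
lemma avgFrom_nice {d : ℕ} {M δ ε : ℝ} {Φ : (ℕ → ℝ) → V}
    (hM : 0 ≤ M) (hδ : 0 ≤ δ) (hε : 0 ≤ ε)
    (hB : Bdd M Φ) (hUC : UC d Φ) (hmod : Mod d δ ε Φ) (hPer : ∀ i, Per i Φ) :
    ∀ m j, j + m = d →
      Bdd M (avgFrom Φ m j) ∧ UC d (avgFrom Φ m j) ∧ Mod d δ ε (avgFrom Φ m j) ∧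
      (∀ i, Per i (avgFrom Φ m j)) ∧ DepLt j (avgFrom Φ m j) := by
  intro m
  induction m with
  | zero =>
    intro j hj
    have hjd : j = d := by omega
    subst hjd
    exact ⟨hB, hUC, hmod, hPer, uc_depLt hUC⟩
  | succ m ih =>
    intro j hj
    obtain ⟨ihB, ihUC, ihmod, ihPer, ihDep⟩ := ih (j+1) (by omega)
    refine ⟨bdd_avg hM ihUC ihB j, uc_avg ihUC j, mod_avg hδ hε ihUC ihmod j,
      fun i => per_avg (ihPer i) j, dep_avg ihDep j rfl⟩

lemma lineBound {d k : ℕ} {δ ε M : ℝ} {Φ : (ℕ → ℝ) → V}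
    (hδ : 0 < δ) (hε : 0 ≤ ε) (hM : 0 ≤ M) (hk : 1 ≤ k) (hd : 1 ≤ d)
    (hfreq : 4 * π / 2^k ≤ δ)
    (hB : Bdd M Φ) (hUC : UC d Φ) (hmod : Mod d δ ε Φ) (hPer : ∀ i, Per i Φ) :
    ∀ m, m ≤ d - 1 →
      ‖(∫ τ in (0:ℝ)..(2*π), Φ (ditherAngle k τ))
        - ∫ τ in (0:ℝ)..(2*π), (avgFrom Φ m (d-m)) (ditherAngle k τ)‖ ≤ 2*ε*(2*π)*m := by
  intro m
  induction m with
  | zero =>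
    intro _
    show ‖_ - _‖ ≤ _
    have : avgFrom Φ 0 (d-0) = Φ := rfl
    rw [this]
    simp [sub_self]
  | succ m ih =>
    intro hm
    have hm' : m ≤ d - 1 := by omega
    have ihb := ih hm'
    set j := d - (m+1) with hjdef
    have hj1 : 1 ≤ j := by omega
    have hjd : j + 1 ≤ d := by omega
    have hj2 : j + 1 = d - m := by omega
    have hunfold : avgFrom Φ (m+1) (d-(m+1)) = avg j (avgFrom Φ m (d-m)) := by
      show avg (d-(m+1)) (avgFrom Φ m (d-(m+1)+1)) = _
      rw [← hjdef, hj2]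
    rw [hunfold]
    obtain ⟨tB, tUC, tmod, tPer, tDep⟩ :=
      avgFrom_nice hM hδ.le hε hB hUC hmod hPer m (d-m) (by omega)
    have hstep := step (Φ := avgFrom Φ m (d-m)) hδ hε hj1 hjd hk hfreq tUC tmod
      (by rw [hj2]; exact tDep) (tPer j)
    calc ‖(∫ τ in (0:ℝ)..(2*π), Φ (ditherAngle k τ))
          - ∫ τ in (0:ℝ)..(2*π), (avg j (avgFrom Φ m (d-m))) (ditherAngle k τ)‖
        ≤ ‖(∫ τ in (0:ℝ)..(2*π), Φ (ditherAngle k τ))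
            - ∫ τ in (0:ℝ)..(2*π), (avgFrom Φ m (d-m)) (ditherAngle k τ)‖
          + ‖(∫ τ in (0:ℝ)..(2*π), (avgFrom Φ m (d-m)) (ditherAngle k τ))
            - ∫ τ in (0:ℝ)..(2*π), (avg j (avgFrom Φ m (d-m))) (ditherAngle k τ)‖ :=
          norm_sub_le_norm_sub_add_norm_sub _ _ _
      _ ≤ 2*ε*(2*π)*m + 2*ε*(2*π) := add_le_add ihb hstep
      _ = 2*ε*(2*π)*(m+1) := by ring
      _ = 2*ε*(2*π)*((m:ℝ)+1) := by norm_num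
      _ = 2*ε*(2*π)*(((m+1:ℕ)):ℝ) := by push_cast; ring

/-- Core approximation: the dither line integral approximates the full average. -/
lemma core {d k : ℕ} {δ ε M : ℝ} {Φ : (ℕ → ℝ) → V}
    (hδ : 0 < δ) (hε : 0 ≤ ε) (hM : 0 ≤ M) (hk : 1 ≤ k) (hd : 1 ≤ d)
    (hfreq : 4 * π / 2^k ≤ δ)
    (hB : Bdd M Φ) (hUC : UC d Φ) (hmod : Mod d δ ε Φ) (hPer : ∀ i, Per i Φ) :
    ‖(2*π)⁻¹ • (∫ τ in (0:ℝ)..(2*π), Φ (ditherAngle k τ)) - (avgFrom Φ d 0) Z‖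
      ≤ 2*ε*d := by
  obtain ⟨d', rfl⟩ : ∃ d', d = d'+1 := ⟨d-1, by omega⟩
  have hL := lineBound hδ hε hM hk hd hfreq hB hUC hmod hPer d' (by omega)
  have hd'eq : d' + 1 - d' = 1 := by omega
  rw [hd'eq] at hL
  set T := avgFrom Φ d' 1 with hTdef
  obtain ⟨tB, tUC, tmod, tPer, tDep⟩ :=
    avgFrom_nice hM hδ.le hε hB hUC hmod hPer d' 1 (by omega)
  have hexact : (2*π)⁻¹ • (∫ τ in (0:ℝ)..(2*π), T (ditherAngle k τ))
      = (avgFrom Φ (d'+1) 0) Z := by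
    have h1 : ∀ τ : ℝ, T (ditherAngle k τ) = T (Function.update Z 0 τ) := by
      intro τ
      apply tDep
      intro i hi
      have : i = 0 := by omega
      subst this
      simp [ditherAngle, Z]
    have h2 : (∫ τ in (0:ℝ)..(2*π), T (ditherAngle k τ))
        = ∫ τ in (0:ℝ)..(2*π), T (Function.update Z 0 τ) := by
      apply intervalIntegral.integral_congr
      intro τ _
      exact h1 τ
    rw [h2]
    show _ = avg 0 (avgFrom Φ d' (0+1)) Z
    rw [avg]
  calc ‖(2*π)⁻¹ • (∫ τ in (0:ℝ)..(2*π), Φ (ditherAngle k τ)) - (avgFrom Φ (d'+1) 0) Z‖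
      = ‖(2*π)⁻¹ • ((∫ τ in (0:ℝ)..(2*π), Φ (ditherAngle k τ))
          - (∫ τ in (0:ℝ)..(2*π), T (ditherAngle k τ)))‖ := by
        rw [← hexact, smul_sub]
    _ = (2*π)⁻¹ * ‖(∫ τ in (0:ℝ)..(2*π), Φ (ditherAngle k τ))
          - (∫ τ in (0:ℝ)..(2*π), T (ditherAngle k τ))‖ := by
        rw [norm_smul, Real.norm_eq_abs, abs_of_pos (by positivity)]
    _ ≤ (2*π)⁻¹ * (2*ε*(2*π)*d') := by
        apply mul_le_mul_of_nonneg_left hL (by positivity)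
    _ = 2*ε*d' := by
        have : (2*π) ≠ 0 := by positivity
        field_simp
    _ ≤ 2*ε*((d':ℝ)+1) := by nlinarith [hε, Nat.cast_nonneg (α := ℝ) d']
    _ = 2*ε*(((d'+1:ℕ)):ℝ) := by push_cast; ring
/-- the scaled angle map `θ ↦ (4π θ₀, 2π θ₁, …)` -/
def scaleM (θ : ℕ → ℝ) : ℕ → ℝ := fun j => if j = 0 then 4*π*θ 0 else 2*π*θ j

lemma scaleM_eq (θ : ℕ → ℝ) : scaleM θ = (2:ℝ) • ThetaMap θ := by
  funext j
  simp only [scaleM, ThetaMap, Pi.smul_apply, smul_eq_mul]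
  rcases eq_or_ne j 0 with rfl | h
  · simp; ring
  · simp [h]; ring

lemma scaleM_Z : scaleM Z = Z := by
  funext j
  simp only [scaleM, Z]
  rcases eq_or_ne j 0 with rfl | h
  · simp
  · simp [h]

lemma scaleM_coord_cont : ∀ i, Continuous fun θ : ℕ → ℝ => scaleM θ i := by
  intro i
  unfold scaleM
  rcases eq_or_ne i 0 with rfl | h
  · simpa using (continuous_apply 0 : Continuous fun θ : ℕ → ℝ => θ 0).const_mul (4*π)
  · simp only [if_neg h]
    exact continuous_const.mul (continuous_apply i)

lemma scaleM_update (θ : ℕ → ℝ) (j : ℕ) (s : ℝ) :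
    scaleM (Function.update θ j s)
      = Function.update (scaleM θ) j ((if j = 0 then 4*π else 2*π) * s) := by
  funext i
  rcases eq_or_ne i j with rfl | hne
  · simp only [Function.update_self, scaleM, Function.update_apply]
    rcases eq_or_ne i 0 with rfl | h
    · simp
    · simp [h]
  · simp only [Function.update_apply, if_neg hne, scaleM]
    rcases eq_or_ne i 0 with rfl | h
    · simp [if_neg hne]
    · simp [h, if_neg hne]

lemma uc_scale {d : ℕ} {Φ : (ℕ → ℝ) → V} (hUC : UC d Φ) :
    UC d (fun θ => Φ (scaleM θ)) := by
  intro ε hε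
  obtain ⟨δ, hδ, hm⟩ := hUC ε hε
  have hπ : (0:ℝ) < π := Real.pi_pos
  refine ⟨δ / (4*π), by positivity, ?_⟩
  intro θ θ' hag
  apply hm
  intro i hi
  have h1 := hag i hi
  have hv : ∀ ψ : ℕ → ℝ, scaleM ψ i = (if i = 0 then 4*π else 2*π) * ψ i := by
    intro ψ
    by_cases h0 : i = 0 <;> simp [scaleM, h0]
  have habs : |(if i = 0 then 4*π else 2*π : ℝ)| ≤ 4*π := by
    split
    · rw [abs_of_pos (by positivity)]
    · rw [abs_of_pos (by positivity)]; linarith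
  rw [hv θ, hv θ', ← mul_sub, abs_mul]
  calc |(if i = 0 then 4*π else 2*π : ℝ)| * |θ i - θ' i|
      ≤ (4*π) * (δ/(4*π)) := by
        apply mul_le_mul habs h1 (abs_nonneg _) (by positivity)
    _ = δ := by field_simp
  
lemma bdd_scale {M : ℝ} {Φ : (ℕ → ℝ) → V} (hB : Bdd M Φ) :
    Bdd M (fun θ => Φ (scaleM θ)) := fun θ => hB _

/-- conjugation of `cavg` by `scaleM` -/
lemma cavg_scale {d : ℕ} {Φ : (ℕ → ℝ) → V} (hUC : UC d Φ) (hPer : ∀ i, Per i Φ) (j : ℕ) :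
    cavg j (fun θ => Φ (scaleM θ)) = fun θ => (avg j Φ) (scaleM θ) := by
  have hπ : (0:ℝ) < π := Real.pi_pos
  funext θ
  have hrw : ∀ s : ℝ, Φ (scaleM (Function.update θ j s))
      = Φ (Function.update (scaleM θ) j ((if j = 0 then 4*π else 2*π) * s)) := by
    intro s; rw [scaleM_update]
  have hint : ∀ (a b : ℝ), IntervalIntegrable
      (fun u => Φ (Function.update (scaleM θ) j u)) volume a b :=
    curve_integrable hUC update_cont
  have hper : Function.Periodic (fun u => Φ (Function.update (scaleM θ) j u)) (2*π) := by
    intro u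
    exact hPer j (scaleM θ) u
  show (∫ s in (0:ℝ)..1, Φ (scaleM (Function.update θ j s))) = (avg j Φ) (scaleM θ)
  rcases eq_or_ne j 0 with rfl | hj
  · have : (∫ s in (0:ℝ)..1, Φ (scaleM (Function.update θ 0 s)))
        = ∫ s in (0:ℝ)..1, Φ (Function.update (scaleM θ) 0 ((4*π) * s)) := by
      apply intervalIntegral.integral_congr
      intro s _
      simpa using hrw s
    rw [this]
    rw [intervalIntegral.integral_comp_mul_left
      (fun u => Φ (Function.update (scaleM θ) 0 u)) (by positivity : (4*π:ℝ) ≠ 0)]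
    rw [mul_zero, mul_one]
    have hsplit : (∫ u in (0:ℝ)..(4*π), Φ (Function.update (scaleM θ) 0 u))
        = (∫ u in (0:ℝ)..(2*π), Φ (Function.update (scaleM θ) 0 u))
          + ∫ u in (2*π)..(4*π), Φ (Function.update (scaleM θ) 0 u) := by
      rw [intervalIntegral.integral_add_adjacent_intervals (hint _ _) (hint _ _)]
    have hshift : (∫ u in (2*π)..(4*π), Φ (Function.update (scaleM θ) 0 u))
        = ∫ u in (0:ℝ)..(2*π), Φ (Function.update (scaleM θ) 0 u) := by
      have h24 : (4*π:ℝ) = 2*π + 2*π := by ring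
      rw [h24]
      have := hper.intervalIntegral_add_eq (2*π) 0
      simpa using this
    rw [hsplit, hshift, avg]
    rw [← two_smul ℝ (∫ u in (0:ℝ)..(2*π), Φ (Function.update (scaleM θ) 0 u)), smul_smul]
    congr 1
    have : (π:ℝ) ≠ 0 := Real.pi_ne_zero
    field_simp
    ring
  · have : (∫ s in (0:ℝ)..1, Φ (scaleM (Function.update θ j s)))
        = ∫ s in (0:ℝ)..1, Φ (Function.update (scaleM θ) j ((2*π) * s)) := by
      apply intervalIntegral.integral_congr
      intro s _
      simpa [hj] using hrw s
    rw [this]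
    rw [intervalIntegral.integral_comp_mul_left
      (fun u => Φ (Function.update (scaleM θ) j u)) (by positivity : (2*π:ℝ) ≠ 0)]
    rw [mul_zero, mul_one, avg]

/-- conjugation of the whole iterated average -/
lemma cavgFrom_scale {d : ℕ} {M δ ε : ℝ} {Φ : (ℕ → ℝ) → V}
    (hM : 0 ≤ M) (hδ : 0 ≤ δ) (hε : 0 ≤ ε)
    (hB : Bdd M Φ) (hUC : UC d Φ) (hmod : Mod d δ ε Φ) (hPer : ∀ i, Per i Φ) :
    ∀ m j, j + m = d →
      cavgFrom (fun θ => Φ (scaleM θ)) m j = fun θ => (avgFrom Φ m j) (scaleM θ) := by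
  intro m
  induction m with
  | zero => intro j hj; rfl
  | succ m ih =>
    intro j hj
    have ihe := ih (j+1) (by omega)
    show cavg j (cavgFrom (fun θ => Φ (scaleM θ)) m (j+1)) = _
    rw [ihe]
    obtain ⟨tB, tUC, tmod, tPer, tDep⟩ :=
      avgFrom_nice hM hδ hε hB hUC hmod hPer m (j+1) (by omega)
    rw [cavg_scale tUC tPer j]
    rfl

lemma cavgFrom_snoc {Φ : (ℕ → ℝ) → V} :
    ∀ m j, cavgFrom Φ (m+1) j = cavgFrom (cavg (j+m) Φ) m j := by
  intro m
  induction m with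
  | zero =>
    intro j
    show cavg j (cavgFrom Φ 0 (j+1)) = cavgFrom (cavg (j+0) Φ) 0 j
    simp only [Nat.add_zero]
    rfl
  | succ m ih =>
    intro j
    show cavg j (cavgFrom Φ (m+1) (j+1)) = cavg j (cavgFrom (cavg (j+(m+1)) Φ) m (j+1))
    rw [ih (j+1)]
    have : j + 1 + m = j + (m+1) := by omega
    rw [this]

lemma mod_cavg {m : ℕ} {δ ε : ℝ} {Φ : (ℕ → ℝ) → V} (hδ : 0 ≤ δ)
    (hUC : UC (m+1) Φ) (h : Mod (m+1) δ ε Φ) : Mod m δ ε (cavg m Φ) := by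
  intro θ θ' hag
  have h1 : IntervalIntegrable (fun s => Φ (Function.update θ m s)) volume 0 1 :=
    curve_integrable hUC update_cont 0 1
  have h2 : IntervalIntegrable (fun s => Φ (Function.update θ' m s)) volume 0 1 :=
    curve_integrable hUC update_cont 0 1
  have key : cavg m Φ θ - cavg m Φ θ' =
      ∫ s in (0:ℝ)..1, (Φ (Function.update θ m s) - Φ (Function.update θ' m s)) := by
    rw [intervalIntegral.integral_sub h1 h2]
    rfl
  rw [key]
  have hb := intervalIntegral.norm_integral_le_of_norm_le_const
    (a := (0:ℝ)) (b := 1) (C := ε)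
    (f := fun s => Φ (Function.update θ m s) - Φ (Function.update θ' m s))
    (by
      intro s _
      show ‖Φ (Function.update θ m s) - Φ (Function.update θ' m s)‖ ≤ ε
      apply h
      intro i hi
      rcases eq_or_ne i m with rfl | hij
      · simpa using hδ
      · simp only [Function.update_apply, if_neg hij]
        exact hag i (by omega))
  simpa using hb

lemma bdd_cavg {m : ℕ} {M : ℝ} {Φ : (ℕ → ℝ) → V} (hM : 0 ≤ M)
    (hUC : UC (m+1) Φ) (h : Bdd M Φ) : Bdd M (cavg m Φ) := by
  intro θ
  have hb := intervalIntegral.norm_integral_le_of_norm_le_const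
    (a := (0:ℝ)) (b := 1) (C := M)
    (f := fun s => Φ (Function.update θ m s)) (fun s _ => h _)
  simpa [cavg] using hb

lemma uc_cavg {m : ℕ} {Φ : (ℕ → ℝ) → V} (hUC : UC (m+1) Φ) : UC m (cavg m Φ) := by
  intro ε hε
  obtain ⟨δ, hδ, hm⟩ := hUC ε hε
  exact ⟨δ, hδ, mod_cavg hδ.le hUC hm⟩
/-- the 1-dimensional probability measure `Leb|_[0,1]` -/
def mu01 : Measure ℝ := volume.restrict (Icc (0:ℝ) 1)

instance : IsProbabilityMeasure mu01 := by
  constructor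
  rw [mu01, Measure.restrict_apply_univ, Real.volume_Icc]
  norm_num

lemma pad_insert (m : ℕ) (s : ℝ) (z' : Fin m → ℝ) :
    padTo (m+1) (WithLp.toLp 2 ((MeasurableEquiv.piFinSuccAbove (fun _ : Fin (m+1) => ℝ) (Fin.last m)).symm
      (s, z')))
      = Function.update (padTo m (WithLp.toLp 2 z')) m s := by
  have hsymm : (MeasurableEquiv.piFinSuccAbove (fun _ : Fin (m+1) => ℝ) (Fin.last m)).symm
      (s, z') = (Fin.last m).insertNth s z' := by
    rw [MeasurableEquiv.piFinSuccAbove_symm_apply]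
    rfl
  rw [hsymm]
  funext jj
  rcases lt_trichotomy jj m with hlt | heq | hgt
  · have h1 : jj < m + 1 := by omega
    have e1 : padTo (m+1) (WithLp.toLp 2 ((Fin.last m).insertNth s z')) jj = z' ⟨jj, hlt⟩ := by
      simp only [padTo, dif_pos h1, PiLp.toLp_apply]
      have : (⟨jj, h1⟩ : Fin (m+1)) = (Fin.last m).succAbove ⟨jj, hlt⟩ := by
        rw [Fin.succAbove_last]
        rfl
      rw [this, Fin.insertNth_apply_succAbove]
    rw [e1, Function.update_apply, if_neg (by omega)]
    simp [padTo, hlt]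
  · subst heq
    have h1 : jj < jj + 1 := by omega
    have e1 : padTo (jj+1) (WithLp.toLp 2 ((Fin.last jj).insertNth s z')) jj = s := by
      simp only [padTo, dif_pos h1, PiLp.toLp_apply]
      have : (⟨jj, h1⟩ : Fin (jj+1)) = Fin.last jj := rfl
      rw [this, Fin.insertNth_apply_same]
    rw [e1, Function.update_self]
  · have h1 : ¬ jj < m + 1 := by omega
    simp only [padTo, dif_neg h1]
    rw [Function.update_apply, if_neg (by omega)]
    simp [padTo, show ¬ jj < m by omega]

lemma pad_coord_cont (m : ℕ) :
    ∀ i, Continuous fun p : ℝ × (Fin m → ℝ) => Function.update (padTo m (WithLp.toLp 2 p.2)) m p.1 i := by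
  intro i
  by_cases hne : i = m
  · subst hne
    simp only [Function.update_self]
    exact continuous_fst
  · have heq : ∀ p : ℝ × (Fin m → ℝ), Function.update (padTo m (WithLp.toLp 2 p.2)) m p.1 i = padTo m (WithLp.toLp 2 p.2) i := by
      intro p
      rw [Function.update_apply, if_neg hne]
    simp only [heq]
    by_cases h : i < m
    · simp only [padTo, dif_pos h]
      exact (continuous_apply _).comp continuous_snd
    · simp only [padTo, dif_neg h]
      exact continuous_const

/-- iterated integration over the cube -/
lemma cube_iter : ∀ (m : ℕ) (Φ : (ℕ → ℝ) → V) (M : ℝ), 0 ≤ M → Bdd M Φ → UC m Φ →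
    ∫ z : (Fin m → ℝ), Φ (padTo m (WithLp.toLp 2 z)) ∂(Measure.pi fun _ => mu01) = cavgFrom Φ m 0 Z := by
  intro m
  induction m with
  | zero =>
    intro Φ M hM hB hUC
    have hpad : ∀ z : Fin 0 → ℝ, padTo 0 (WithLp.toLp 2 z) = Z := by
      intro z
      funext jj
      simp [padTo, Z]
    have : ∀ z : Fin 0 → ℝ, Φ (padTo 0 (WithLp.toLp 2 z)) = Φ Z := fun z => by rw [hpad]
    rw [integral_congr_ae (Eventually.of_forall this), integral_const]
    haveI : IsProbabilityMeasure (Measure.pi fun _ : Fin 0 => mu01) := by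
      constructor
      rw [Measure.pi_univ]
      simp
    rw [probReal_univ]
    simp only [ENNReal.toReal_one, one_smul]
    rfl
  | succ m ih =>
    intro Φ M hM hB hUC
    set e := MeasurableEquiv.piFinSuccAbove (fun _ : Fin (m+1) => ℝ) (Fin.last m) with hedef
    have mp : MeasurePreserving e (Measure.pi fun _ : Fin (m+1) => mu01)
        ((mu01).prod (Measure.pi fun _ : Fin m => mu01)) :=
      measurePreserving_piFinSuccAbove (fun _ : Fin (m+1) => mu01) (Fin.last m)
    have hstep1 : ∫ z : (Fin (m+1) → ℝ), Φ (padTo (m+1) (WithLp.toLp 2 z)) ∂(Measure.pi fun _ => mu01)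
        = ∫ p : ℝ × (Fin m → ℝ), Φ (Function.update (padTo m (WithLp.toLp 2 p.2)) m p.1)
            ∂((mu01).prod (Measure.pi fun _ : Fin m => mu01)) := by
      rw [← (MeasurePreserving.symm _ mp).map_eq, integral_map_equiv]
      apply integral_congr_ae
      apply Eventually.of_forall
      intro p
      obtain ⟨s, z'⟩ := p
      show Φ (padTo (m+1) (WithLp.toLp 2 (e.symm (s, z')))) = _
      rw [hedef, pad_insert m s z']
    have hcont : Continuous fun p : ℝ × (Fin m → ℝ) =>
        Φ (Function.update (padTo m (WithLp.toLp 2 p.2)) m p.1) :=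
      (uc_continuous hUC).comp (continuous_pi (pad_coord_cont m))
    have hint : Integrable (fun p : ℝ × (Fin m → ℝ) => Φ (Function.update (padTo m (WithLp.toLp 2 p.2)) m p.1))
        ((mu01).prod (Measure.pi fun _ : Fin m => mu01)) := by
      apply Integrable.mono' (integrable_const M) hcont.aestronglyMeasurable
      filter_upwards with p using hB _
    have hstep2 : ∫ p : ℝ × (Fin m → ℝ), Φ (Function.update (padTo m (WithLp.toLp 2 p.2)) m p.1)
            ∂((mu01).prod (Measure.pi fun _ : Fin m => mu01))
        = ∫ z' : (Fin m → ℝ), (∫ s : ℝ, Φ (Function.update (padTo m (WithLp.toLp 2 z')) m s) ∂mu01)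
            ∂(Measure.pi fun _ : Fin m => mu01) :=
      integral_prod_symm _ hint
    have hinner : ∀ z' : Fin m → ℝ, (∫ s : ℝ, Φ (Function.update (padTo m (WithLp.toLp 2 z')) m s) ∂mu01)
        = (cavg m Φ) (padTo m (WithLp.toLp 2 z')) := by
      intro z'
      show _ = ∫ s in (0:ℝ)..1, Φ (Function.update (padTo m (WithLp.toLp 2 z')) m s)
      rw [intervalIntegral.integral_of_le zero_le_one, mu01,
        ← integral_Icc_eq_integral_Ioc]
    have hstep3 : ∫ z' : (Fin m → ℝ), (∫ s : ℝ, Φ (Function.update (padTo m (WithLp.toLp 2 z')) m s) ∂mu01)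
            ∂(Measure.pi fun _ : Fin m => mu01)
        = ∫ z' : (Fin m → ℝ), (cavg m Φ) (padTo m (WithLp.toLp 2 z')) ∂(Measure.pi fun _ : Fin m => mu01) := by
      apply integral_congr_ae
      exact Eventually.of_forall hinner
    rw [hstep1, hstep2, hstep3, ih (cavg m Φ) M hM (bdd_cavg hM hUC hB) (uc_cavg hUC),
      cavgFrom_snoc m 0]
    simp

/-- restriction of the pi volume to the cube is the product of `mu01` -/
lemma pi_restrict_cube (d : ℕ) :
    (volume : Measure (Fin d → ℝ)).restrict (univ.pi fun _ => Icc (0:ℝ) 1)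
      = Measure.pi (fun _ : Fin d => mu01) := by
  refine (Measure.pi_eq fun s hs => ?_).symm
  rw [volume_pi, Measure.restrict_apply (MeasurableSet.univ_pi hs)]
  have : (univ.pi s) ∩ (univ.pi fun _ => Icc (0:ℝ) 1) = univ.pi (fun i => s i ∩ Icc 0 1) := by
    rw [← Set.pi_inter_distrib]
  rw [this, Measure.pi_pi]
  apply Finset.prod_congr rfl
  intro i _
  rw [mu01, Measure.restrict_apply (hs i)]

/-- The cube integral as an iterated average. -/
lemma cube_integral {d : ℕ} (Φ : (ℕ → ℝ) → V) (M : ℝ) (hM : 0 ≤ M)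
    (hB : Bdd M Φ) (hUC : UC d Φ) :
    ∫ z in cube d, Φ (padTo d z) = cavgFrom Φ d 0 Z := by
  have hcube : (MeasurableEquiv.toLp 2 (Fin d → ℝ)) ⁻¹' (cube d)
      = univ.pi fun _ => Icc (0:ℝ) 1 := by
    ext x
    simp only [Set.mem_preimage, cube, Set.mem_setOf_eq, Set.mem_pi, Set.mem_univ,
      forall_true_left]
    rfl
  have hmap : Measure.map (⇑(MeasurableEquiv.toLp 2 (Fin d → ℝ)))
      (volume : Measure (Fin d → ℝ)) = (volume : Measure (EuclideanSpace ℝ (Fin d))) :=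
    ((EuclideanSpace.volume_preserving_symm_measurableEquiv_toLp (Fin d)).symm _).map_eq
  calc ∫ z in cube d, Φ (padTo d z)
      = ∫ z in cube d, Φ (padTo d z)
          ∂(Measure.map (⇑(MeasurableEquiv.toLp 2 (Fin d → ℝ))) volume) := by
        rw [hmap]
    _ = ∫ x in (MeasurableEquiv.toLp 2 (Fin d → ℝ)) ⁻¹' (cube d),
          Φ (padTo d ((MeasurableEquiv.toLp 2 (Fin d → ℝ)) x)) ∂volume :=
        setIntegral_map_equiv _ _ _
    _ = ∫ x in univ.pi (fun _ => Icc (0:ℝ) 1), Φ (padTo d (WithLp.toLp 2 x)) ∂volume := by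
        rw [hcube]
        rfl
    _ = ∫ x : (Fin d → ℝ), Φ (padTo d (WithLp.toLp 2 x)) ∂(Measure.pi fun _ : Fin d => mu01) := by
        rw [← pi_restrict_cube]
    _ = cavgFrom Φ d 0 Z := cube_iter d Φ M hM hB hUC
lemma abs_sin_sub_sin (x y : ℝ) : |Real.sin x - Real.sin y| ≤ |x - y| := by
  rw [Real.sin_sub_sin]
  rw [abs_mul, abs_mul]
  calc |2| * |Real.sin ((x-y)/2)| * |Real.cos ((x+y)/2)|
      ≤ |2| * |(x-y)/2| * 1 := by
        apply mul_le_mul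
        · apply mul_le_mul_of_nonneg_left (Real.abs_sin_le_abs) (abs_nonneg _)
        · exact Real.abs_cos_le_one _
        · exact abs_nonneg _
        · positivity
    _ = |x - y| := by
        rw [abs_two, abs_div, abs_two, mul_one]
        ring

lemma abs_cos_sub_cos (x y : ℝ) : |Real.cos x - Real.cos y| ≤ |x - y| := by
  rw [Real.cos_sub_cos]
  rw [abs_mul, abs_mul]
  calc |(-2:ℝ)| * |Real.sin ((x+y)/2)| * |Real.sin ((x-y)/2)|
      ≤ |(-2:ℝ)| * 1 * |(x-y)/2| := by
        apply mul_le_mul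
        · apply mul_le_mul_of_nonneg_left (Real.abs_sin_le_one _) (abs_nonneg _)
        · exact Real.abs_sin_le_abs
        · exact abs_nonneg _
        · positivity
    _ = |x - y| := by
        have h2 : |(-2:ℝ)| = 2 := by norm_num
        rw [h2, abs_div, abs_two, mul_one]
        ring

lemma abs_prod_le_one (s : Finset ℕ) (f : ℕ → ℝ) (h : ∀ i ∈ s, |f i| ≤ 1) :
    |∏ i ∈ s, f i| ≤ 1 := by
  rw [Finset.abs_prod]
  apply Finset.prod_le_one (fun i _ => abs_nonneg _) h

lemma abs_prod_sub_prod (s : Finset ℕ) (f g : ℕ → ℝ) (hf : ∀ i ∈ s, |f i| ≤ 1)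
    (hg : ∀ i ∈ s, |g i| ≤ 1) :
    |(∏ i ∈ s, f i) - ∏ i ∈ s, g i| ≤ ∑ i ∈ s, |f i - g i| := by
  induction s using Finset.induction_on with
  | empty => simp
  | insert a s ha ih =>
    rw [Finset.prod_insert ha, Finset.prod_insert ha, Finset.sum_insert ha]
    have hfa := hf a (Finset.mem_insert_self a s)
    have hga := hg a (Finset.mem_insert_self a s)
    have hf' : ∀ i ∈ s, |f i| ≤ 1 := fun i hi => hf i (Finset.mem_insert_of_mem hi)
    have hg' : ∀ i ∈ s, |g i| ≤ 1 := fun i hi => hg i (Finset.mem_insert_of_mem hi)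
    calc |f a * ∏ i ∈ s, f i - g a * ∏ i ∈ s, g i|
        ≤ |f a * ((∏ i ∈ s, f i) - ∏ i ∈ s, g i)| + |(f a - g a) * ∏ i ∈ s, g i| := by
          have : f a * ∏ i ∈ s, f i - g a * ∏ i ∈ s, g i
              = f a * ((∏ i ∈ s, f i) - ∏ i ∈ s, g i) + (f a - g a) * ∏ i ∈ s, g i := by ring
          rw [this]
          exact abs_add_le _ _
      _ ≤ 1 * (∑ i ∈ s, |f i - g i|) + |f a - g a| * 1 := by
          apply add_le_add
          · rw [abs_mul]
            apply mul_le_mul hfa (ih hf' hg') (abs_nonneg _) zero_le_one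
          · rw [abs_mul]
            apply mul_le_mul_of_nonneg_left (abs_prod_le_one s g hg') (abs_nonneg _)
      _ = |f a - g a| + ∑ i ∈ s, |f i - g i| := by ring

lemma abs_pow_sub_pow (j : ℕ) (x y : ℝ) (hx : |x| ≤ 1) (hy : |y| ≤ 1) :
    |x^j - y^j| ≤ j * |x - y| := by
  induction j with
  | zero => simp
  | succ j ih =>
    push_cast
    have key : x^(j+1) - y^(j+1) = x * (x^j - y^j) + (x - y) * y^j := by ring
    calc |x^(j+1) - y^(j+1)| ≤ |x * (x^j - y^j)| + |(x - y) * y^j| := by rw [key]; exact abs_add_le _ _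
      _ ≤ 1 * (j * |x - y|) + |x - y| * 1 := by
          apply add_le_add
          · rw [abs_mul]; exact mul_le_mul hx ih (abs_nonneg _) zero_le_one
          · rw [abs_mul]
            apply mul_le_mul_of_nonneg_left _ (abs_nonneg _)
            rw [abs_pow]
            exact pow_le_one₀ (abs_nonneg _) hy
      _ = ((j:ℝ)+1) * |x - y| := by ring

section SPH
variable {n : ℕ} (hn : 2 ≤ n)

lemma sph_comp_bdd (θ : ℕ → ℝ) (m : Fin n) : |sphParam n θ m| ≤ 1 := by
  have hp : ∀ s : Finset ℕ, |∏ j ∈ s, Real.sin (θ j)| ≤ 1 :=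
    fun s => abs_prod_le_one s _ (fun i _ => Real.abs_sin_le_one _)
  simp only [sphParam, PiLp.toLp_apply]
  split
  · rw [abs_mul]
    exact mul_le_one₀ (Real.abs_cos_le_one _) (abs_nonneg _) (hp _)
  · split
    · rw [abs_mul]
      exact mul_le_one₀ (Real.abs_sin_le_one _) (abs_nonneg _) (hp _)
    · rw [abs_mul]
      exact mul_le_one₀ (Real.abs_cos_le_one _) (abs_nonneg _) (hp _)

lemma sph_norm_le (θ : ℕ → ℝ) : ‖sphParam n θ‖ ≤ n := by
  have h1 : ‖sphParam n θ‖ = Real.sqrt (∑ m : Fin n, ‖sphParam n θ m‖^2) :=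
    EuclideanSpace.norm_eq _
  rw [h1]
  have h2 : (∑ m : Fin n, ‖sphParam n θ m‖^2) ≤ (n:ℝ)^2 := by
    calc (∑ m : Fin n, ‖sphParam n θ m‖^2) ≤ ∑ m : Fin n, 1 := by
          apply Finset.sum_le_sum
          intro m _
          have := sph_comp_bdd θ m
          rw [Real.norm_eq_abs]
          nlinarith [abs_nonneg (sphParam n θ m)]
      _ = (n:ℝ) := by simp
      _ ≤ (n:ℝ)^2 := by
          have h3 : n ≤ n^2 := Nat.le_self_pow (by norm_num) n
          exact_mod_cast h3
  calc Real.sqrt (∑ m : Fin n, ‖sphParam n θ m‖^2) ≤ Real.sqrt ((n:ℝ)^2) :=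
        Real.sqrt_le_sqrt h2
    _ = (n:ℝ) := by
        rw [Real.sqrt_sq (Nat.cast_nonneg n)]

lemma prod_sin_mod {δ : ℝ} (hδ : 0 ≤ δ) (θ θ' : ℕ → ℝ) (s : Finset ℕ)
    (hs : ∀ j ∈ s, j < n - 1) (hag : ∀ i < n - 1, |θ i - θ' i| ≤ δ) :
    |(∏ j ∈ s, Real.sin (θ j)) - ∏ j ∈ s, Real.sin (θ' j)| ≤ s.card * δ := by
  calc |(∏ j ∈ s, Real.sin (θ j)) - ∏ j ∈ s, Real.sin (θ' j)|
      ≤ ∑ j ∈ s, |Real.sin (θ j) - Real.sin (θ' j)| :=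
        abs_prod_sub_prod s _ _ (fun i _ => Real.abs_sin_le_one _)
          (fun i _ => Real.abs_sin_le_one _)
    _ ≤ ∑ j ∈ s, δ := by
        apply Finset.sum_le_sum
        intro j hj
        calc |Real.sin (θ j) - Real.sin (θ' j)| ≤ |θ j - θ' j| := abs_sin_sub_sin _ _
          _ ≤ δ := hag j (hs j hj)
    _ = s.card * δ := by rw [Finset.sum_const, nsmul_eq_mul]

lemma card_Ico_le (a : ℕ) : ((Finset.Ico a (n-1)).card : ℝ) ≤ (n:ℝ) := by
  rw [Nat.card_Ico]
  have : n - 1 - a ≤ n := by omega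
  exact_mod_cast this

include hn in
lemma sph_comp_mod {δ : ℝ} (hδ : 0 ≤ δ) (θ θ' : ℕ → ℝ)
    (hag : ∀ i < n - 1, |θ i - θ' i| ≤ δ) (m : Fin n) :
    |sphParam n θ m - sphParam n θ' m| ≤ ((n:ℝ)+1) * δ := by
  have key : ∀ (c c' p p' : ℝ), |c| ≤ 1 → |p'| ≤ 1 → |c - c'| ≤ δ →
      |p - p'| ≤ (n:ℝ)*δ → |c * p - c' * p'| ≤ ((n:ℝ)+1)*δ := by
    intro c c' p p' hc hp' hcd hpd
    calc |c * p - c' * p'| = |c * (p - p') + (c - c') * p'| := by ring_nf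
      _ ≤ |c * (p - p')| + |(c - c') * p'| := abs_add_le _ _
      _ ≤ 1 * ((n:ℝ)*δ) + δ * 1 := by
          apply add_le_add
          · rw [abs_mul]
            exact mul_le_mul hc hpd (abs_nonneg _) zero_le_one
          · rw [abs_mul]
            exact mul_le_mul hcd hp' (abs_nonneg _) hδ
      _ = ((n:ℝ)+1)*δ := by ring
  have hprod : ∀ a : ℕ, |(∏ j ∈ Finset.Ico a (n-1), Real.sin (θ j))
      - ∏ j ∈ Finset.Ico a (n-1), Real.sin (θ' j)| ≤ (n:ℝ)*δ := by
    intro a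
    calc |(∏ j ∈ Finset.Ico a (n-1), Real.sin (θ j))
        - ∏ j ∈ Finset.Ico a (n-1), Real.sin (θ' j)|
        ≤ (Finset.Ico a (n-1)).card * δ := by
          apply prod_sin_mod hδ θ θ' _ _ hag
          intro j hj
          exact (Finset.mem_Ico.mp hj).2
      _ ≤ (n:ℝ)*δ := mul_le_mul_of_nonneg_right (card_Ico_le a) hδ
  have h0 : 0 < n - 1 := by omega
  simp only [sphParam, PiLp.toLp_apply]
  split
  · apply key _ _ _ _ (Real.abs_cos_le_one _)
      (abs_prod_le_one _ _ (fun i _ => Real.abs_sin_le_one _))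
      (le_trans (abs_cos_sub_cos _ _) (hag 0 h0)) (hprod 1)
  · split
    · apply key _ _ _ _ (Real.abs_sin_le_one _)
        (abs_prod_le_one _ _ (fun i _ => Real.abs_sin_le_one _))
        (le_trans (abs_sin_sub_sin _ _) (hag 0 h0)) (hprod 1)
    · rename_i h0' h1'
      apply key _ _ _ _ (Real.abs_cos_le_one _)
        (abs_prod_le_one _ _ (fun i _ => Real.abs_sin_le_one _))
        (le_trans (abs_cos_sub_cos _ _) (hag ((m:ℕ)-1) (by
          have := m.isLt
          omega))) (hprod (m:ℕ))

include hn in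
lemma sph_mod {δ : ℝ} (hδ : 0 ≤ δ) (θ θ' : ℕ → ℝ)
    (hag : ∀ i < n - 1, |θ i - θ' i| ≤ δ) :
    ‖sphParam n θ - sphParam n θ'‖ ≤ (n:ℝ)*((n:ℝ)+1) * δ := by
  have h1 : ‖sphParam n θ - sphParam n θ'‖
      = Real.sqrt (∑ m : Fin n, ‖sphParam n θ m - sphParam n θ' m‖^2) := by
    rw [EuclideanSpace.norm_eq]
    congr 1
  rw [h1]
  have h2 : (∑ m : Fin n, ‖sphParam n θ m - sphParam n θ' m‖^2)
      ≤ (n:ℝ) * (((n:ℝ)+1)*δ)^2 := by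
    calc (∑ m : Fin n, ‖sphParam n θ m - sphParam n θ' m‖^2)
        ≤ ∑ m : Fin n, (((n:ℝ)+1)*δ)^2 := by
          apply Finset.sum_le_sum
          intro m _
          have := sph_comp_mod hn hδ θ θ' hag m
          rw [Real.norm_eq_abs]
          nlinarith [abs_nonneg (sphParam n θ m - sphParam n θ' m)]
      _ = (n:ℝ) * (((n:ℝ)+1)*δ)^2 := by
          rw [Finset.sum_const, nsmul_eq_mul]
          simp
  calc Real.sqrt (∑ m : Fin n, ‖sphParam n θ m - sphParam n θ' m‖^2)
      ≤ Real.sqrt ((n:ℝ)^2 * (((n:ℝ)+1)*δ)^2) := by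
        apply Real.sqrt_le_sqrt
        have hn1 : (1:ℝ) ≤ (n:ℝ) := by exact_mod_cast hn.trans' (by norm_num)
        have h4 : (n:ℝ) ≤ (n:ℝ)^2 := by nlinarith
        have h5 : (n:ℝ) * (((n:ℝ)+1)*δ)^2 ≤ (n:ℝ)^2 * (((n:ℝ)+1)*δ)^2 :=
          mul_le_mul_of_nonneg_right h4 (sq_nonneg _)
        linarith
    _ = (n:ℝ) * (((n:ℝ)+1)*δ) := by
        rw [← mul_pow, Real.sqrt_sq (by positivity)]
    _ = (n:ℝ)*((n:ℝ)+1) * δ := by ring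

lemma gram_bdd (θ : ℕ → ℝ) : |gramG n θ| ≤ 1 := by
  apply abs_prod_le_one
  intro i _
  rw [abs_pow, abs_abs]
  exact pow_le_one₀ (abs_nonneg _) (Real.abs_sin_le_one _)

lemma gram_mod {δ : ℝ} (hδ : 0 ≤ δ) (θ θ' : ℕ → ℝ)
    (hag : ∀ i < n - 1, |θ i - θ' i| ≤ δ) :
    |gramG n θ - gramG n θ'| ≤ (n:ℝ)*(n:ℝ) * δ := by
  calc |gramG n θ - gramG n θ'|
      ≤ ∑ j ∈ Finset.Ico 1 (n-1), abs (|Real.sin (θ j)|^j - |Real.sin (θ' j)|^j) := by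
        apply abs_prod_sub_prod
        · intro i _
          rw [abs_pow, abs_abs]
          exact pow_le_one₀ (abs_nonneg _) (Real.abs_sin_le_one _)
        · intro i _
          rw [abs_pow, abs_abs]
          exact pow_le_one₀ (abs_nonneg _) (Real.abs_sin_le_one _)
    _ ≤ ∑ j ∈ Finset.Ico 1 (n-1), (n:ℝ)*δ := by
        apply Finset.sum_le_sum
        intro j hj
        have hj' : j < n - 1 := (Finset.mem_Ico.mp hj).2
        calc abs (|Real.sin (θ j)|^j - |Real.sin (θ' j)|^j)
            ≤ j * abs (|Real.sin (θ j)| - |Real.sin (θ' j)|) :=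
              abs_pow_sub_pow j _ _ (by rw [abs_abs]; exact Real.abs_sin_le_one _)
                (by rw [abs_abs]; exact Real.abs_sin_le_one _)
          _ ≤ j * |Real.sin (θ j) - Real.sin (θ' j)| := by
              apply mul_le_mul_of_nonneg_left (abs_abs_sub_abs_le_abs_sub _ _)
                (Nat.cast_nonneg j)
          _ ≤ j * |θ j - θ' j| := by
              apply mul_le_mul_of_nonneg_left (abs_sin_sub_sin _ _) (Nat.cast_nonneg j)
          _ ≤ (n:ℝ) * δ := by
              apply mul_le_mul _ (hag j hj') (abs_nonneg _) (Nat.cast_nonneg n)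
              exact_mod_cast (by omega : j ≤ n)
    _ ≤ (n:ℝ)*(n:ℝ)*δ := by
        rw [Finset.sum_const, nsmul_eq_mul]
        have := card_Ico_le (n := n) 1
        have hδn : 0 ≤ (n:ℝ)*δ := by positivity
        nlinarith
  
lemma sph_per (θ : ℕ → ℝ) (i : ℕ) (s : ℝ) :
    sphParam n (Function.update θ i (s + 2*π)) = sphParam n (Function.update θ i s) := by
  have hcos : ∀ l, Real.cos ((Function.update θ i (s + 2*π)) l)
      = Real.cos ((Function.update θ i s) l) := by
    intro l
    rcases eq_or_ne l i with rfl | h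
    · simp only [Function.update_self]
      exact Real.cos_add_two_pi s
    · simp [Function.update_apply, h]
  have hsin : ∀ l, Real.sin ((Function.update θ i (s + 2*π)) l)
      = Real.sin ((Function.update θ i s) l) := by
    intro l
    rcases eq_or_ne l i with rfl | h
    · simp only [Function.update_self]
      exact Real.sin_add_two_pi s
    · simp [Function.update_apply, h]
  ext m
  simp only [sphParam, PiLp.toLp_apply]
  split
  · rw [hcos 0]
    congr 1
    exact Finset.prod_congr rfl (fun j _ => hsin j)
  · split
    · rw [hsin 0]
      congr 1
      exact Finset.prod_congr rfl (fun j _ => hsin j)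
    · rw [hcos ((m:ℕ)-1)]
      congr 1
      exact Finset.prod_congr rfl (fun j _ => hsin j)

lemma gram_per (θ : ℕ → ℝ) (i : ℕ) (s : ℝ) :
    gramG n (Function.update θ i (s + 2*π)) = gramG n (Function.update θ i s) := by
  unfold gramG
  apply Finset.prod_congr rfl
  intro j _
  rcases eq_or_ne j i with rfl | h
  · simp only [Function.update_self]
    rw [Real.sin_add_two_pi]
  · simp [Function.update_apply, h]

end SPH

lemma exists_KInf (u : ℕ → ℝ) (C : ℝ) (h0 : ∀ k, 0 ≤ u k) (hC : ∀ k, u k ≤ C)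
    (hlim : ∀ ε > 0, ∃ K : ℕ, ∀ k ≥ K, u k ≤ ε) :
    ∃ α : ℝ → ℝ, IsClassKInf α ∧ ∀ k : ℕ, 1 ≤ k → u k ≤ 1/(2 * α k) := by
  classical
  set v : ℝ → ℝ := fun t => sSup ((fun jn : ℕ => 2 * u jn) '' {jn : ℕ | t - 1 ≤ (jn:ℝ)})
    with hvdef
  have hvne : ∀ t : ℝ, ((fun jn : ℕ => 2 * u jn) '' {jn : ℕ | t - 1 ≤ (jn:ℝ)}).Nonempty := by
    intro t
    obtain ⟨jn, hjn⟩ := exists_nat_ge (t - 1)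
    exact ⟨2 * u jn, ⟨jn, hjn, rfl⟩⟩
  have hvbdd : ∀ t : ℝ, BddAbove ((fun jn : ℕ => 2 * u jn) '' {jn : ℕ | t - 1 ≤ (jn:ℝ)}) := by
    intro t
    refine ⟨2 * C, ?_⟩
    rintro r ⟨jn, _, rfl⟩
    show 2 * u jn ≤ 2 * C
    linarith [hC jn]
  have hv0 : ∀ t, 0 ≤ v t := by
    intro t
    obtain ⟨r, ⟨jn, hjn, rfl⟩⟩ := hvne t
    calc (0:ℝ) ≤ 2 * u jn := by linarith [h0 jn]
      _ ≤ v t := le_csSup (hvbdd t) ⟨jn, hjn, rfl⟩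
  have hvanti : Antitone v := by
    intro t t' htt'
    apply csSup_le_csSup (hvbdd t) (hvne t')
    rintro r ⟨jn, hjn, rfl⟩
    exact ⟨jn, by simp only [Set.mem_setOf_eq] at *; linarith, rfl⟩
  have hvint : ∀ a b : ℝ, IntervalIntegrable v volume a b :=
    fun a b => hvanti.intervalIntegrable
  have hvtail : ∀ (k : ℕ) (s : ℝ), s ≤ (k:ℝ) + 1 → 2 * u k ≤ v s := by
    intro k s hs
    apply le_csSup (hvbdd s)
    exact ⟨k, by simp only [Set.mem_setOf_eq]; linarith, rfl⟩
  have hvlim : ∀ ε > 0, ∃ T : ℝ, ∀ t ≥ T, v t ≤ ε := by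
    intro ε hε
    obtain ⟨K, hK⟩ := hlim (ε/2) (by linarith)
    refine ⟨K + 1, fun t ht => ?_⟩
    apply Real.sSup_le _ (by linarith)
    rintro r ⟨jn, hjn, rfl⟩
    show 2 * u jn ≤ ε
    simp only [Set.mem_setOf_eq] at hjn
    have hjnK : K ≤ jn := by
      by_contra hcon
      push_neg at hcon
      have : (jn:ℝ) < K := by exact_mod_cast hcon
      linarith
    have := hK jn hjnK
    linarith
  set w : ℝ → ℝ := fun t => (∫ s in t..(t+1), v s) + Real.exp (-t) with hwdef
  have hwcont : Continuous w := by
    have hprim : Continuous (fun r : ℝ => ∫ s in (0:ℝ)..r, v s) :=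
      intervalIntegral.continuous_primitive hvint 0
    have heq : ∀ t : ℝ, (∫ s in t..(t+1), v s)
        = (∫ s in (0:ℝ)..(t+1), v s) - ∫ s in (0:ℝ)..t, v s := by
      intro t
      have := intervalIntegral.integral_add_adjacent_intervals (hvint 0 t) (hvint t (t+1))
      linarith
    have : w = fun t => ((∫ s in (0:ℝ)..(t+1), v s) - ∫ s in (0:ℝ)..t, v s)
        + Real.exp (-t) := by
      funext t
      rw [hwdef]
      simp only
      rw [heq t]
    rw [this]
    apply Continuous.add
    · exact (hprim.comp (continuous_id.add continuous_const)).sub hprim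
    · exact Real.continuous_exp.comp continuous_neg
  have hwanti : Antitone w := by
    intro t t' htt'
    apply add_le_add
    · have e1 : (∫ s in t..(t+1), v s) = ∫ x in (0:ℝ)..1, v (t + x) := by
        rw [intervalIntegral.integral_comp_add_left v t]
        norm_num
      have e2 : (∫ s in t'..(t'+1), v s) = ∫ x in (0:ℝ)..1, v (t' + x) := by
        rw [intervalIntegral.integral_comp_add_left v t']
        norm_num
      rw [e1, e2]
      apply intervalIntegral.integral_mono_on zero_le_one
      · exact (hvanti.comp_monotone (fun a b hab => by
          show t' + a ≤ t' + b
          linarith : Monotone fun x : ℝ => t' + x)).intervalIntegrable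
      · exact (hvanti.comp_monotone (fun a b hab => by
          show t + a ≤ t + b
          linarith : Monotone fun x : ℝ => t + x)).intervalIntegrable
      · intro x _
        exact hvanti (by linarith)
    · exact Real.exp_le_exp.mpr (by linarith)
  have hwpos : ∀ t, 0 < w t := by
    intro t
    have h1 : 0 ≤ ∫ s in t..(t+1), v s :=
      intervalIntegral.integral_nonneg (by linarith) (fun s _ => hv0 s)
    have h2 : 0 < Real.exp (-t) := Real.exp_pos _
    rw [hwdef]
    simp only
    linarith
  have hw2u : ∀ k : ℕ, 2 * u k ≤ w k := by
    intro k
    have h1 : (∫ s in (k:ℝ)..((k:ℝ)+1), (2 * u k)) ≤ ∫ s in (k:ℝ)..((k:ℝ)+1), v s := by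
      apply intervalIntegral.integral_mono_on (by linarith) intervalIntegrable_const
        (hvint _ _)
      intro s hs
      exact hvtail k s hs.2
    rw [intervalIntegral.integral_const] at h1
    simp only [add_sub_cancel_left, smul_eq_mul, one_mul] at h1
    have h2 : 0 < Real.exp (-(k:ℝ)) := Real.exp_pos _
    rw [hwdef]
    simp only
    linarith
  have hwlim : Tendsto w atTop (nhds 0) := by
    have hub : ∀ t : ℝ, w t ≤ v t + Real.exp (-t) := by
      intro t
      rw [hwdef]
      simp only
      have h1 : (∫ s in t..(t+1), v s) ≤ ∫ s in t..(t+1), v t := by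
        apply intervalIntegral.integral_mono_on (by linarith) (hvint _ _)
          intervalIntegrable_const
        intro s hs
        exact hvanti hs.1
      rw [intervalIntegral.integral_const] at h1
      simp only [add_sub_cancel_left, smul_eq_mul, one_mul] at h1
      linarith
    have hvt : Tendsto v atTop (nhds 0) := by
      rw [Metric.tendsto_atTop]
      intro ε hε
      obtain ⟨T, hT⟩ := hvlim (ε/2) (by linarith)
      refine ⟨T, fun t ht => ?_⟩
      rw [Real.dist_eq, sub_zero, abs_of_nonneg (hv0 t)]
      linarith [hT t ht]
    have hexp : Tendsto (fun t : ℝ => Real.exp (-t)) atTop (nhds 0) := by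
      exact Real.tendsto_exp_comp_nhds_zero.mpr tendsto_neg_atTop_atBot
    have hsum : Tendsto (fun t => v t + Real.exp (-t)) atTop (nhds 0) := by
      have := hvt.add hexp
      simpa using this
    exact squeeze_zero (fun t => (hwpos t).le) hub hsum
  -- the class K∞ function
  refine ⟨fun t => t / (1 + t * w t), ⟨⟨?_, ?_, by simp⟩, ?_⟩, ?_⟩
  · -- continuity
    apply ContinuousOn.div continuousOn_id
      ((continuous_const.add (continuous_id.mul hwcont)).continuousOn)
    intro t ht
    simp only [Set.mem_Ici] at ht
    have h1 : 0 ≤ t * w t := mul_nonneg ht (hwpos t).le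
    show (1:ℝ) + t * w t ≠ 0
    intro hcon
    linarith
  · -- strict mono
    intro s hs t ht hst
    simp only [Set.mem_Ici] at hs ht
    have hws := hwpos s
    have hwt := hwpos t
    have hds : 0 < 1 + s * w s := by nlinarith
    have hdt : 0 < 1 + t * w t := by nlinarith
    have hds' : 0 < 1 + s * w t := by nlinarith [hwanti hst.le, mul_nonneg hs hwt.le]
    have step1 : s / (1 + s * w s) ≤ s / (1 + s * w t) := by
      apply div_le_div_of_nonneg_left hs hds'
      have := hwanti hst.le
      nlinarith
    have step2 : s / (1 + s * w t) < t / (1 + t * w t) := by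
      rw [div_lt_div_iff₀ hds' hdt]
      nlinarith [hwt]
    calc s / (1 + s * w s) ≤ s / (1 + s * w t) := step1
      _ < t / (1 + t * w t) := step2
  · -- tendsto atTop
    rw [tendsto_atTop]
    intro B
    set B' : ℝ := max B 1 with hB'def
    have hB'pos : 0 < B' := lt_of_lt_of_le one_pos (le_max_right _ _)
    have hwev : ∀ᶠ t in atTop, w t ≤ 1/(2*B') := by
      have : Ioo (-(1/(2*B'))) (1/(2*B')) ∈ nhds (0:ℝ) := by
        apply Ioo_mem_nhds <;> [linarith [one_div_pos.mpr (by positivity : (0:ℝ) < 2*B')]; positivity]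
      filter_upwards [hwlim this] with t ht
      exact ht.2.le
    rw [eventually_atTop] at hwev ⊢
    obtain ⟨T, hT⟩ := hwev
    refine ⟨max T (2*B'), fun t ht => ?_⟩
    have ht1 : T ≤ t := le_trans (le_max_left _ _) ht
    have ht2 : 2*B' ≤ t := le_trans (le_max_right _ _) ht
    have htpos : 0 < t := by linarith
    have hwt := hwpos t
    have hden : 0 < 1 + t * w t := by nlinarith
    have hden2 : 0 < 1 + t * (1/(2*B')) := by positivity
    have step1 : t / (1 + t * (1/(2*B'))) ≤ t / (1 + t * w t) := by
      apply div_le_div_of_nonneg_left htpos.le hden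
      have := hT t ht1
      nlinarith
    have step2 : B' ≤ t / (1 + t * (1/(2*B'))) := by
      rw [le_div_iff₀ hden2]
      have : B' * (1 + t * (1/(2*B'))) = B' + t/2 := by
        field_simp
      rw [this]
      linarith
    calc B ≤ B' := le_max_left _ _
      _ ≤ t / (1 + t * (1/(2*B'))) := step2
      _ ≤ t / (1 + t * w t) := step1
  · -- the bound
    intro k hk
    have hk1 : (1:ℝ) ≤ (k:ℝ) := by exact_mod_cast hk
    have hwk := hwpos (k:ℝ)
    have hden : 0 < 1 + (k:ℝ) * w k := by nlinarith
    have hαk : (fun t : ℝ => t / (1 + t * w t)) (k:ℝ) = (k:ℝ) / (1 + (k:ℝ) * w k) := rfl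
    rw [hαk]
    have h2 : 2 * ((k:ℝ) / (1 + (k:ℝ) * w k)) = 2*(k:ℝ) / (1 + (k:ℝ) * w k) := by ring
    rw [h2, one_div_div]
    rw [le_div_iff₀ (by positivity : (0:ℝ) < 2*(k:ℝ))]
    have h3 : (k:ℝ) * (2 * u k) ≤ (k:ℝ) * w k :=
      mul_le_mul_of_nonneg_left (hw2u k) (by positivity)
    nlinarith [h0 k]

end Stmt9

/-- Claim 3: `F̆_k`, `Ĕ_k` approximate the corresponding cube integrals,
uniformly on compact sets, with error `1/(2α(k))` for some class-`𝒦∞` function `α`. -/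
theorem statement9 (n : ℕ) (hn : 2 ≤ n) (J : EuclideanSpace ℝ (Fin n) → ℝ)
    (hJ : ContDiff ℝ (⊤ : ℕ∞) J) (a b : ℝ) (ha : 0 < a) (hb : 0 < b)
    (Ktil : Set (EuclideanSpace ℝ (Fin n))) (hKtil : IsCompact Ktil)
    (ρ : ℝ) (hρ : 0 < ρ) :
    ∃ α : ℝ → ℝ, IsClassKInf α ∧
      ∀ k : ℕ, 1 ≤ k → ∀ x ∈ Ktil, ∀ η ∈ Icc (-ρ) ρ,
        ‖Fbreve n J a b k x - b • ∫ z in cube (n-1),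
            (J (x + a • sphParam n ((2:ℝ) • ThetaMap (padTo (n-1) z))) *
              gramG n ((2:ℝ) • ThetaMap (padTo (n-1) z))) •
              sphParam n ((2:ℝ) • ThetaMap (padTo (n-1) z))‖ ≤ 1 / (2 * α k) ∧
        ‖Ebreve n b k η + (b * η) • ∫ z in cube (n-1),
            gramG n ((2:ℝ) • ThetaMap (padTo (n-1) z)) •
              sphParam n ((2:ℝ) • ThetaMap (padTo (n-1) z))‖ ≤ 1 / (2 * α k) := by
  classical
  have hπ : (0:ℝ) < π := Real.pi_pos
  set d : ℕ := n - 1 with hddef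
  have hd : 1 ≤ d := by omega
  have hn1 : (1:ℝ) ≤ (n:ℝ) := by exact_mod_cast (by omega : 1 ≤ n)
  -- the integrand families
  set PhiF : EuclideanSpace ℝ (Fin n) → (ℕ → ℝ) → EuclideanSpace ℝ (Fin n) :=
    fun x θ => (J (x + a • sphParam n θ) * gramG n θ) • sphParam n θ with hPhiFdef
  set PhiE : (ℕ → ℝ) → EuclideanSpace ℝ (Fin n) :=
    fun θ => gramG n θ • sphParam n θ with hPhiEdef
  -- compact neighbourhood and bounds for J
  have hK2c : IsCompact (Metric.cthickening (a*n+1) Ktil) := hKtil.cthickening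
  obtain ⟨MJ0, hMJ0⟩ := hK2c.exists_bound_of_continuousOn (hJ.continuous.continuousOn)
  set MJ : ℝ := max MJ0 0 with hMJdef
  have hMJnn : 0 ≤ MJ := le_max_right _ _
  have hMJ : ∀ y ∈ Metric.cthickening (a*n+1) Ktil, |J y| ≤ MJ := by
    intro y hy
    calc |J y| = ‖J y‖ := (Real.norm_eq_abs _).symm
      _ ≤ MJ0 := hMJ0 y hy
      _ ≤ MJ := le_max_left _ _
  have hmem : ∀ x ∈ Ktil, ∀ θ : ℕ → ℝ, x + a • sphParam n θ ∈ Metric.cthickening (a*n+1) Ktil := by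
    intro x hx θ
    apply Metric.mem_cthickening_of_dist_le _ x _ _ hx
    rw [dist_eq_norm, add_sub_cancel_left, norm_smul, Real.norm_eq_abs, abs_of_pos ha]
    have h1 := Stmt9.sph_norm_le (n := n) θ
    nlinarith
  set MF : ℝ := MJ * n with hMFdef
  have hMF0 : 0 ≤ MF := by positivity
  -- boundedness of the families
  have hBF : ∀ x ∈ Ktil, Stmt9.Bdd MF (PhiF x) := by
    intro x hx θ
    show ‖(J (x + a • sphParam n θ) * gramG n θ) • sphParam n θ‖ ≤ MF
    rw [norm_smul, Real.norm_eq_abs, abs_mul]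
    calc |J (x + a • sphParam n θ)| * |gramG n θ| * ‖sphParam n θ‖
        ≤ MJ * 1 * n := by
          apply mul_le_mul
          · exact mul_le_mul (hMJ _ (hmem x hx θ)) (Stmt9.gram_bdd θ) (abs_nonneg _) hMJnn
          · exact Stmt9.sph_norm_le θ
          · exact norm_nonneg _
          · positivity
      _ = MF := by rw [hMFdef]; ring
  have hBE : Stmt9.Bdd (n:ℝ) PhiE := by
    intro θ
    show ‖gramG n θ • sphParam n θ‖ ≤ (n:ℝ)
    rw [norm_smul, Real.norm_eq_abs]
    calc |gramG n θ| * ‖sphParam n θ‖ ≤ 1 * n := by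
          apply mul_le_mul (Stmt9.gram_bdd θ) (Stmt9.sph_norm_le θ) (norm_nonneg _) zero_le_one
      _ = (n:ℝ) := one_mul _
  -- product estimate
  have hkey : ∀ (u u' v v' : ℝ) (w w' : EuclideanSpace ℝ (Fin n)),
      ‖(u*v)•w - (u'*v')•w'‖ ≤ |u| * |v| * ‖w - w'‖ + (|u| * |v - v'| + |u - u'| * |v'|)*‖w'‖ := by
    intro u u' v v' w w'
    have e1 : (u*v)•w - (u'*v')•w' = (u*v)•(w - w') + ((u*v) - (u'*v'))•w' := by
      rw [smul_sub, sub_smul]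
      abel
    rw [e1]
    have e2 : |u*v - u'*v'| ≤ |u| * |v - v'| + |u - u'| * |v'| := by
      have e3 : u*v - u'*v' = u*(v - v') + (u - u')*v' := by ring
      calc |u*v - u'*v'| = |u*(v - v') + (u - u')*v'| := by rw [e3]
        _ ≤ |u*(v - v')| + |(u - u')*v'| := abs_add_le _ _
        _ = |u| * |v - v'| + |u - u'| * |v'| := by rw [abs_mul, abs_mul]
    calc ‖(u*v)•(w - w') + ((u*v) - (u'*v'))•w'‖
        ≤ ‖(u*v)•(w - w')‖ + ‖((u*v) - (u'*v'))•w'‖ := norm_add_le _ _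
      _ = |u*v| * ‖w - w'‖ + |u*v - u'*v'| * ‖w'‖ := by
          rw [norm_smul, norm_smul, Real.norm_eq_abs, Real.norm_eq_abs]
      _ ≤ |u| * |v| * ‖w - w'‖ + (|u| * |v - v'| + |u - u'| * |v'|)*‖w'‖ := by
          rw [abs_mul]
          apply add_le_add (le_refl _)
          exact mul_le_mul_of_nonneg_right e2 (norm_nonneg _)
  -- uniform modulus for the F-family
  have hFam : ∀ ε > 0, ∃ δ > 0, ∀ x ∈ Ktil, Stmt9.Mod d δ ε (PhiF x) := by
    intro ε hε
    have hUCJ := hK2c.uniformContinuousOn_of_continuous (hJ.continuous.continuousOn)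
    rw [Metric.uniformContinuousOn_iff_le] at hUCJ
    obtain ⟨δJ, hδJpos, hδJ⟩ := hUCJ (ε/(2*((n:ℝ)+1))) (by positivity)
    refine ⟨min (δJ/(a*((n:ℝ)*((n:ℝ)+1))+1))
      (ε/(2*(MJ+1)*((n:ℝ)*((n:ℝ)+1)+(n:ℝ)*((n:ℝ)*(n:ℝ)))+1)), by positivity, ?_⟩
    set δ := min (δJ/(a*((n:ℝ)*((n:ℝ)+1))+1))
      (ε/(2*(MJ+1)*((n:ℝ)*((n:ℝ)+1)+(n:ℝ)*((n:ℝ)*(n:ℝ)))+1)) with hδdef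
    have hδpos : 0 < δ := by rw [hδdef]; positivity
    intro x hx θ θ' hag
    have hag' : ∀ i < n - 1, |θ i - θ' i| ≤ δ := fun i hi => hag i (by omega)
    have hφ : ‖sphParam n θ - sphParam n θ'‖ ≤ (n:ℝ)*((n:ℝ)+1)*δ :=
      Stmt9.sph_mod hn hδpos.le θ θ' hag'
    have hγ : |gramG n θ - gramG n θ'| ≤ (n:ℝ)*(n:ℝ)*δ :=
      Stmt9.gram_mod hδpos.le θ θ' hag'
    have hJd : |J (x + a • sphParam n θ) - J (x + a • sphParam n θ')| ≤ ε/(2*((n:ℝ)+1)) := by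
      have hdist : dist (x + a • sphParam n θ) (x + a • sphParam n θ') ≤ δJ := by
        rw [dist_eq_norm]
        have e4 : (x + a • sphParam n θ) - (x + a • sphParam n θ')
            = a • (sphParam n θ - sphParam n θ') := by
          rw [smul_sub]
          abel
        rw [e4, norm_smul, Real.norm_eq_abs, abs_of_pos ha]
        have hδ1 : δ ≤ δJ/(a*((n:ℝ)*((n:ℝ)+1))+1) := min_le_left _ _
        have h5 : a * ‖sphParam n θ - sphParam n θ'‖ ≤ a * ((n:ℝ)*((n:ℝ)+1)*δ) :=
          mul_le_mul_of_nonneg_left hφ ha.le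
        have h6 : a*((n:ℝ)*((n:ℝ)+1)) * δ ≤ a*((n:ℝ)*((n:ℝ)+1)) * (δJ/(a*((n:ℝ)*((n:ℝ)+1))+1)) :=
          mul_le_mul_of_nonneg_left hδ1 (by positivity)
        have h7 : a*((n:ℝ)*((n:ℝ)+1)) * (δJ/(a*((n:ℝ)*((n:ℝ)+1))+1)) ≤ δJ := by
          rw [mul_div_assoc']
          rw [div_le_iff₀ (by positivity)]
          nlinarith [hδJpos]
        nlinarith
      have := hδJ _ (hmem x hx θ) _ (hmem x hx θ') hdist
      rwa [Real.dist_eq] at this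
    show ‖(J (x + a • sphParam n θ) * gramG n θ) • sphParam n θ
        - (J (x + a • sphParam n θ') * gramG n θ') • sphParam n θ'‖ ≤ ε
    have hb1 : |J (x + a • sphParam n θ)| ≤ MJ := hMJ _ (hmem x hx θ)
    have hb2 : |gramG n θ| ≤ 1 := Stmt9.gram_bdd θ
    have hb3 : |gramG n θ'| ≤ 1 := Stmt9.gram_bdd θ'
    have hb4 : ‖sphParam n θ'‖ ≤ (n:ℝ) := Stmt9.sph_norm_le θ'
    calc ‖(J (x + a • sphParam n θ) * gramG n θ) • sphParam n θ
        - (J (x + a • sphParam n θ') * gramG n θ') • sphParam n θ'‖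
        ≤ |J (x + a • sphParam n θ)| * |gramG n θ| * ‖sphParam n θ - sphParam n θ'‖
          + (|J (x + a • sphParam n θ)| * |gramG n θ - gramG n θ'|
            + |J (x + a • sphParam n θ) - J (x + a • sphParam n θ')| * |gramG n θ'|)
            *‖sphParam n θ'‖ := hkey _ _ _ _ _ _
      _ ≤ MJ*1*((n:ℝ)*((n:ℝ)+1)*δ)
          + (MJ*((n:ℝ)*(n:ℝ)*δ) + (ε/(2*((n:ℝ)+1)))*1)*(n:ℝ) := by
          apply add_le_add
          · apply mul_le_mul (mul_le_mul hb1 hb2 (abs_nonneg _) hMJnn) hφ (norm_nonneg _)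
              (by positivity)
          · apply mul_le_mul _ hb4 (norm_nonneg _) _
            · apply add_le_add
              · exact mul_le_mul hb1 hγ (abs_nonneg _) hMJnn
              · exact mul_le_mul hJd hb3 (abs_nonneg _) (by positivity)
            · positivity
      _ ≤ ε := by
          have hδ2 : δ ≤ ε/(2*(MJ+1)*((n:ℝ)*((n:ℝ)+1)+(n:ℝ)*((n:ℝ)*(n:ℝ)))+1) :=
            min_le_right _ _
          set D : ℝ := (MJ+1)*((n:ℝ)*((n:ℝ)+1)+(n:ℝ)*((n:ℝ)*(n:ℝ))) with hDdef
          have hD0 : 0 < D := by rw [hDdef]; positivity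
          have key1 : D*δ ≤ ε/2 := by
            have hδ2' : δ ≤ ε/(2*D+1) := by
              have he7 : 2*(MJ+1)*((n:ℝ)*((n:ℝ)+1)+(n:ℝ)*((n:ℝ)*(n:ℝ)))+1 = 2*D+1 := by
                rw [hDdef]
                ring
              rw [← he7]
              exact hδ2
            have h8 : D*δ ≤ D*(ε/(2*D+1)) := mul_le_mul_of_nonneg_left hδ2' hD0.le
            have h9 : D*(ε/(2*D+1)) ≤ ε/2 := by
              rw [mul_div_assoc', div_le_div_iff₀ (by positivity) two_pos]
              nlinarith
            linarith
          have key2 : (ε/(2*((n:ℝ)+1)))*(n:ℝ) ≤ ε/2 := by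
            rw [div_mul_eq_mul_div, div_le_div_iff₀ (by positivity) two_pos]
            nlinarith
          have expand : MJ*1*((n:ℝ)*((n:ℝ)+1)*δ)
              + (MJ*((n:ℝ)*(n:ℝ)*δ) + (ε/(2*((n:ℝ)+1)))*1)*(n:ℝ)
              = MJ*((n:ℝ)*((n:ℝ)+1))*δ + MJ*((n:ℝ)*((n:ℝ)*(n:ℝ)))*δ
                + (ε/(2*((n:ℝ)+1)))*(n:ℝ) := by ring
          have expand2 : D*δ = MJ*((n:ℝ)*((n:ℝ)+1))*δ + MJ*((n:ℝ)*((n:ℝ)*(n:ℝ)))*δ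
              + ((n:ℝ)*((n:ℝ)+1))*δ + ((n:ℝ)*((n:ℝ)*(n:ℝ)))*δ := by rw [hDdef]; ring
          have q1 : 0 ≤ ((n:ℝ)*((n:ℝ)+1))*δ := by positivity
          have q2 : 0 ≤ ((n:ℝ)*((n:ℝ)*(n:ℝ)))*δ := by positivity
          rw [expand]
          linarith
  -- modulus for the E-family
  have hUCE : Stmt9.UC d PhiE := by
    intro ε hε
    refine ⟨ε/((n:ℝ)*((n:ℝ)+1)+(n:ℝ)*((n:ℝ)*(n:ℝ))+1), by positivity, ?_⟩
    set δ := ε/((n:ℝ)*((n:ℝ)+1)+(n:ℝ)*((n:ℝ)*(n:ℝ))+1) with hδdef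
    have hδpos : 0 < δ := by rw [hδdef]; positivity
    intro θ θ' hag
    have hag' : ∀ i < n - 1, |θ i - θ' i| ≤ δ := fun i hi => hag i (by omega)
    have hφ : ‖sphParam n θ - sphParam n θ'‖ ≤ (n:ℝ)*((n:ℝ)+1)*δ :=
      Stmt9.sph_mod hn hδpos.le θ θ' hag'
    have hγ : |gramG n θ - gramG n θ'| ≤ (n:ℝ)*(n:ℝ)*δ :=
      Stmt9.gram_mod hδpos.le θ θ' hag'
    show ‖gramG n θ • sphParam n θ - gramG n θ' • sphParam n θ'‖ ≤ ε
    have e1 : gramG n θ • sphParam n θ - gramG n θ' • sphParam n θ'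
        = gramG n θ • (sphParam n θ - sphParam n θ')
          + (gramG n θ - gramG n θ') • sphParam n θ' := by
      rw [smul_sub, sub_smul]
      abel
    rw [e1]
    calc ‖gramG n θ • (sphParam n θ - sphParam n θ')
          + (gramG n θ - gramG n θ') • sphParam n θ'‖
        ≤ ‖gramG n θ • (sphParam n θ - sphParam n θ')‖
          + ‖(gramG n θ - gramG n θ') • sphParam n θ'‖ := norm_add_le _ _
      _ = |gramG n θ| * ‖sphParam n θ - sphParam n θ'‖
          + |gramG n θ - gramG n θ'| * ‖sphParam n θ'‖ := by
          rw [norm_smul, norm_smul, Real.norm_eq_abs, Real.norm_eq_abs]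
      _ ≤ 1*((n:ℝ)*((n:ℝ)+1)*δ) + ((n:ℝ)*(n:ℝ)*δ)*(n:ℝ) := by
          apply add_le_add
          · exact mul_le_mul (Stmt9.gram_bdd θ) hφ (norm_nonneg _) zero_le_one
          · exact mul_le_mul hγ (Stmt9.sph_norm_le θ') (norm_nonneg _) (by positivity)
      _ ≤ ε := by
          rw [hδdef]
          rw [div_eq_mul_inv]
          set q : ℝ := (n:ℝ)*((n:ℝ)+1)+(n:ℝ)*((n:ℝ)*(n:ℝ))+1 with hqdef
          have hq0 : 0 < q := by rw [hqdef]; positivity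
          have e5 : 1*((n:ℝ)*((n:ℝ)+1)*(ε*q⁻¹)) + (n:ℝ)*(n:ℝ)*(ε*q⁻¹)*(n:ℝ)
              = (((n:ℝ)*((n:ℝ)+1) + (n:ℝ)*((n:ℝ)*(n:ℝ))) * ε) * q⁻¹ := by ring
          rw [e5]
          rw [← div_eq_mul_inv, div_le_iff₀ hq0]
          nlinarith [hε.le]
  have hUCF : ∀ x ∈ Ktil, Stmt9.UC d (PhiF x) := by
    intro x hx ε hε
    obtain ⟨δ, hδpos, h⟩ := hFam ε hε
    exact ⟨δ, hδpos, h x hx⟩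
  -- periodicity
  have hPerF : ∀ x : EuclideanSpace ℝ (Fin n), ∀ i, Stmt9.Per i (PhiF x) := by
    intro x i θ s
    show (J (x + a • sphParam n (Function.update θ i (s + 2*π)))
        * gramG n (Function.update θ i (s + 2*π)))
        • sphParam n (Function.update θ i (s + 2*π)) = _
    rw [Stmt9.sph_per, Stmt9.gram_per]
  have hPerE : ∀ i, Stmt9.Per i PhiE := by
    intro i θ s
    show gramG n (Function.update θ i (s + 2*π)) • sphParam n (Function.update θ i (s + 2*π)) = _
    rw [Stmt9.sph_per, Stmt9.gram_per]
  -- deviations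
  set AF : EuclideanSpace ℝ (Fin n) → EuclideanSpace ℝ (Fin n) :=
    fun x => Stmt9.avgFrom (PhiF x) d 0 Stmt9.Z with hAFdef
  set AE : EuclideanSpace ℝ (Fin n) := Stmt9.avgFrom PhiE d 0 Stmt9.Z with hAEdef
  set devF : ℕ → EuclideanSpace ℝ (Fin n) → ℝ := fun k x =>
    ‖(2*π)⁻¹ • (∫ τ in (0:ℝ)..(2*π), PhiF x (ditherAngle k τ)) - AF x‖ with hdevFdef
  set devE : ℕ → ℝ := fun k =>
    ‖(2*π)⁻¹ • (∫ τ in (0:ℝ)..(2*π), PhiE (ditherAngle k τ)) - AE‖ with hdevEdef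
  have hAFbdd : ∀ x ∈ Ktil, ‖AF x‖ ≤ MF := by
    intro x hx
    obtain ⟨δ0, hδ0, hm0⟩ := hUCF x hx 1 one_pos
    exact (Stmt9.avgFrom_nice hMF0 hδ0.le zero_le_one (hBF x hx) (hUCF x hx) hm0 (hPerF x)
      d 0 (by omega)).1 Stmt9.Z
  have hAEbdd : ‖AE‖ ≤ (n:ℝ) := by
    obtain ⟨δ0, hδ0, hm0⟩ := hUCE 1 one_pos
    exact (Stmt9.avgFrom_nice (by positivity) hδ0.le zero_le_one hBE hUCE hm0 hPerE
      d 0 (by omega)).1 Stmt9.Z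
  have hlineF : ∀ k : ℕ, ∀ x ∈ Ktil,
      ‖(2*π)⁻¹ • (∫ τ in (0:ℝ)..(2*π), PhiF x (ditherAngle k τ))‖ ≤ MF := by
    intro k x hx
    rw [norm_smul, Real.norm_eq_abs, abs_of_pos (by positivity : (0:ℝ) < (2*π)⁻¹)]
    have h1 : ‖∫ τ in (0:ℝ)..(2*π), PhiF x (ditherAngle k τ)‖ ≤ MF * |2*π - 0| :=
      intervalIntegral.norm_integral_le_of_norm_le_const (fun τ _ => hBF x hx _)
    rw [sub_zero, abs_of_pos (by positivity)] at h1
    calc (2*π)⁻¹ * ‖∫ τ in (0:ℝ)..(2*π), PhiF x (ditherAngle k τ)‖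
        ≤ (2*π)⁻¹ * (MF * (2*π)) := by
          apply mul_le_mul_of_nonneg_left h1 (by positivity)
      _ = MF := by field_simp
  have hlineE : ∀ k : ℕ,
      ‖(2*π)⁻¹ • (∫ τ in (0:ℝ)..(2*π), PhiE (ditherAngle k τ))‖ ≤ (n:ℝ) := by
    intro k
    rw [norm_smul, Real.norm_eq_abs, abs_of_pos (by positivity : (0:ℝ) < (2*π)⁻¹)]
    have h1 : ‖∫ τ in (0:ℝ)..(2*π), PhiE (ditherAngle k τ)‖ ≤ (n:ℝ) * |2*π - 0| :=
      intervalIntegral.norm_integral_le_of_norm_le_const (fun τ _ => hBE _)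
    rw [sub_zero, abs_of_pos (by positivity)] at h1
    calc (2*π)⁻¹ * ‖∫ τ in (0:ℝ)..(2*π), PhiE (ditherAngle k τ)‖
        ≤ (2*π)⁻¹ * ((n:ℝ) * (2*π)) := by
          apply mul_le_mul_of_nonneg_left h1 (by positivity)
      _ = (n:ℝ) := by field_simp
  have hdevFle : ∀ k : ℕ, ∀ x ∈ Ktil, devF k x ≤ 2*MF := by
    intro k x hx
    calc devF k x ≤ ‖(2*π)⁻¹ • (∫ τ in (0:ℝ)..(2*π), PhiF x (ditherAngle k τ))‖ + ‖AF x‖ :=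
          norm_sub_le _ _
      _ ≤ MF + MF := add_le_add (hlineF k x hx) (hAFbdd x hx)
      _ = 2*MF := by ring
  have hdevEle : ∀ k : ℕ, devE k ≤ 2*(n:ℝ) := by
    intro k
    calc devE k ≤ ‖(2*π)⁻¹ • (∫ τ in (0:ℝ)..(2*π), PhiE (ditherAngle k τ))‖ + ‖AE‖ :=
          norm_sub_le _ _
      _ ≤ (n:ℝ) + (n:ℝ) := add_le_add (hlineE k) hAEbdd
      _ = 2*(n:ℝ) := by ring
  set u : ℕ → ℝ := fun k => b * sSup (devF k '' Ktil) + b * ρ * devE k with hudef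
  have hImBdd : ∀ k, BddAbove (devF k '' Ktil) := by
    intro k
    refine ⟨2*MF, ?_⟩
    rintro r ⟨x, hx, rfl⟩
    exact hdevFle k x hx
  have hsSupnn : ∀ k, 0 ≤ sSup (devF k '' Ktil) := by
    intro k
    apply Real.sSup_nonneg
    rintro r ⟨x, hx, rfl⟩
    exact norm_nonneg _
  have hu0 : ∀ k, 0 ≤ u k := by
    intro k
    have h1 : 0 ≤ devE k := norm_nonneg _
    have := hsSupnn k
    positivity
  have huC : ∀ k, u k ≤ b*(2*MF) + b*ρ*(2*(n:ℝ)) := by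
    intro k
    apply add_le_add
    · apply mul_le_mul_of_nonneg_left _ hb.le
      apply Real.sSup_le _ (by positivity)
      rintro r ⟨x, hx, rfl⟩
      exact hdevFle k x hx
    · exact mul_le_mul_of_nonneg_left (hdevEle k) (by positivity)
  have hulim : ∀ ε > 0, ∃ K : ℕ, ∀ k ≥ K, u k ≤ ε := by
    intro ε hε
    set ε₁ : ℝ := ε/(b*(1+ρ)+1) with hε₁def
    have hε₁pos : 0 < ε₁ := by rw [hε₁def]; positivity
    set εc : ℝ := ε₁/(2*(d:ℝ)+1) with hεcdef
    have hεcpos : 0 < εc := by rw [hεcdef]; positivity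
    obtain ⟨δF, hδFpos, hδF⟩ := hFam εc hεcpos
    obtain ⟨δE, hδEpos, hδE⟩ := hUCE εc hεcpos
    set δm : ℝ := min δF δE with hδmdef
    have hδmpos : 0 < δm := lt_min hδFpos hδEpos
    obtain ⟨N, hN⟩ := exists_nat_gt (4*π/δm)
    refine ⟨max N 1, fun k hk => ?_⟩
    have hk1 : 1 ≤ k := le_trans (le_max_right N 1) hk
    have hkN : N ≤ k := le_trans (le_max_left N 1) hk
    have hfreq : 4*π/2^k ≤ δm := by
      have h2k : (4*π/δm : ℝ) < 2^k := by
        calc (4*π/δm : ℝ) < N := hN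
          _ ≤ 2^N := by exact_mod_cast (Nat.lt_two_pow_self (n := N)).le
          _ ≤ 2^k := by
              apply pow_le_pow_right₀ one_le_two hkN
      rw [div_le_iff₀ (by positivity : (0:ℝ) < 2^k)]
      rw [div_lt_iff₀ hδmpos] at h2k
      nlinarith
    have hcore2d : 2*εc*(d:ℝ) ≤ ε₁ := by
      rw [hεcdef]
      have h10 : 2*(ε₁/(2*(d:ℝ)+1))*(d:ℝ) = (2*(d:ℝ))*ε₁/(2*(d:ℝ)+1) := by ring
      rw [h10, div_le_iff₀ (by positivity : (0:ℝ) < 2*(d:ℝ)+1)]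
      nlinarith [hε₁pos.le, Nat.cast_nonneg (α := ℝ) d]
    have hdF : ∀ x ∈ Ktil, devF k x ≤ ε₁ := by
      intro x hx
      have hmodm : Stmt9.Mod d δm εc (PhiF x) :=
        fun θ θ' hh => hδF x hx θ θ' (fun i hi => (hh i hi).trans (min_le_left _ _))
      have hc := Stmt9.core (Φ := PhiF x) hδmpos hεcpos.le hMF0 hk1 hd hfreq
        (hBF x hx) (hUCF x hx) hmodm (hPerF x)
      calc devF k x ≤ 2*εc*(d:ℝ) := hc
        _ ≤ ε₁ := hcore2d
    have hdE : devE k ≤ ε₁ := by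
      have hmodm : Stmt9.Mod d δm εc PhiE :=
        fun θ θ' hh => hδE θ θ' (fun i hi => (hh i hi).trans (min_le_right _ _))
      have hc := Stmt9.core (Φ := PhiE) hδmpos hεcpos.le (by positivity : (0:ℝ) ≤ (n:ℝ))
        hk1 hd hfreq hBE hUCE hmodm hPerE
      calc devE k ≤ 2*εc*(d:ℝ) := hc
        _ ≤ ε₁ := hcore2d
    have hs : sSup (devF k '' Ktil) ≤ ε₁ := by
      apply Real.sSup_le _ hε₁pos.le
      rintro r ⟨x, hx, rfl⟩
      exact hdF x hx
    calc u k ≤ b*ε₁ + b*ρ*ε₁ := by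
          apply add_le_add (mul_le_mul_of_nonneg_left hs hb.le)
            (mul_le_mul_of_nonneg_left hdE (by positivity))
      _ ≤ ε := by
          have he6 : b*ε₁ + b*ρ*ε₁ = (b*(1+ρ))*ε₁ := by ring
          rw [he6, hε₁def, mul_div_assoc', div_le_iff₀ (by positivity : (0:ℝ) < b*(1+ρ)+1)]
          nlinarith [hε.le, hb.le, hρ.le]
  -- construct the class-K∞ function
  obtain ⟨α, hαKInf, hαb⟩ := Stmt9.exists_KInf u (b*(2*MF) + b*ρ*(2*(n:ℝ))) hu0 huC hulim
  refine ⟨α, hαKInf, ?_⟩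
  intro k hk x hx η hη
  obtain ⟨δ0, hδ0pos, hm0⟩ := hUCF x hx 1 one_pos
  obtain ⟨δ0E, hδ0Epos, hm0E⟩ := hUCE 1 one_pos
  have hcubeF : (∫ z in cube d,
      (J (x + a • sphParam n ((2:ℝ) • ThetaMap (padTo d z))) *
        gramG n ((2:ℝ) • ThetaMap (padTo d z))) •
        sphParam n ((2:ℝ) • ThetaMap (padTo d z))) = AF x := by
    have hre : ∀ z : EuclideanSpace ℝ (Fin d),
        (J (x + a • sphParam n ((2:ℝ) • ThetaMap (padTo d z))) *
          gramG n ((2:ℝ) • ThetaMap (padTo d z))) •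
          sphParam n ((2:ℝ) • ThetaMap (padTo d z))
        = (fun θ => PhiF x (Stmt9.scaleM θ)) (padTo d z) := by
      intro z
      show _ = PhiF x (Stmt9.scaleM (padTo d z))
      rw [Stmt9.scaleM_eq]
    calc (∫ z in cube d,
        (J (x + a • sphParam n ((2:ℝ) • ThetaMap (padTo d z))) *
          gramG n ((2:ℝ) • ThetaMap (padTo d z))) •
          sphParam n ((2:ℝ) • ThetaMap (padTo d z)))
        = ∫ z in cube d, (fun θ => PhiF x (Stmt9.scaleM θ)) (padTo d z) :=
          integral_congr_ae (Eventually.of_forall hre)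
      _ = Stmt9.cavgFrom (fun θ => PhiF x (Stmt9.scaleM θ)) d 0 Stmt9.Z :=
          Stmt9.cube_integral _ MF hMF0 (Stmt9.bdd_scale (hBF x hx))
            (Stmt9.uc_scale (hUCF x hx))
      _ = AF x := by
          rw [Stmt9.cavgFrom_scale hMF0 hδ0pos.le zero_le_one (hBF x hx) (hUCF x hx) hm0
            (hPerF x) d 0 (by omega)]
          show Stmt9.avgFrom (PhiF x) d 0 (Stmt9.scaleM Stmt9.Z) = _
          rw [Stmt9.scaleM_Z]
  have hcubeE : (∫ z in cube d,
      gramG n ((2:ℝ) • ThetaMap (padTo d z)) • sphParam n ((2:ℝ) • ThetaMap (padTo d z))) = AE := by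
    have hre : ∀ z : EuclideanSpace ℝ (Fin d),
        gramG n ((2:ℝ) • ThetaMap (padTo d z)) • sphParam n ((2:ℝ) • ThetaMap (padTo d z))
        = (fun θ => PhiE (Stmt9.scaleM θ)) (padTo d z) := by
      intro z
      show _ = PhiE (Stmt9.scaleM (padTo d z))
      rw [Stmt9.scaleM_eq]
    calc (∫ z in cube d,
        gramG n ((2:ℝ) • ThetaMap (padTo d z)) • sphParam n ((2:ℝ) • ThetaMap (padTo d z)))
        = ∫ z in cube d, (fun θ => PhiE (Stmt9.scaleM θ)) (padTo d z) :=
          integral_congr_ae (Eventually.of_forall hre)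
      _ = Stmt9.cavgFrom (fun θ => PhiE (Stmt9.scaleM θ)) d 0 Stmt9.Z :=
          Stmt9.cube_integral _ (n:ℝ) (by positivity) (Stmt9.bdd_scale hBE)
            (Stmt9.uc_scale hUCE)
      _ = AE := by
          rw [Stmt9.cavgFrom_scale (by positivity : (0:ℝ) ≤ (n:ℝ)) hδ0Epos.le zero_le_one
            hBE hUCE hm0E hPerE d 0 (by omega)]
          show Stmt9.avgFrom PhiE d 0 (Stmt9.scaleM Stmt9.Z) = _
          rw [Stmt9.scaleM_Z]
  constructor
  · -- the F-estimate
    have hFb : Fbreve n J a b k x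
        = (b/(2*π)) • (∫ τ in (0:ℝ)..(2*π), PhiF x (ditherAngle k τ)) := rfl
    rw [hFb, hcubeF]
    have he : (b/(2*π)) • (∫ τ in (0:ℝ)..(2*π), PhiF x (ditherAngle k τ)) - b • AF x
        = b • ((2*π)⁻¹ • (∫ τ in (0:ℝ)..(2*π), PhiF x (ditherAngle k τ)) - AF x) := by
      rw [smul_sub, smul_smul, ← div_eq_mul_inv]
    rw [he, norm_smul, Real.norm_eq_abs, abs_of_pos hb]
    show b * devF k x ≤ 1/(2*α k)
    calc b * devF k x ≤ b * sSup (devF k '' Ktil) :=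
          mul_le_mul_of_nonneg_left (le_csSup (hImBdd k) (Set.mem_image_of_mem _ hx)) hb.le
      _ ≤ u k := le_add_of_nonneg_right
            (mul_nonneg (mul_nonneg hb.le hρ.le) (norm_nonneg _))
      _ ≤ 1/(2*α k) := hαb k hk
  · -- the E-estimate
    have hEb : Ebreve n b k η
        = (-(b/(2*π))*η) • (∫ τ in (0:ℝ)..(2*π), PhiE (ditherAngle k τ)) := rfl
    rw [hEb, hcubeE]
    have he2 : (-(b/(2*π))*η) • (∫ τ in (0:ℝ)..(2*π), PhiE (ditherAngle k τ)) + (b*η) • AE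
        = (-(b*η)) • ((2*π)⁻¹ • (∫ τ in (0:ℝ)..(2*π), PhiE (ditherAngle k τ)) - AE) := by
      rw [smul_sub, smul_smul, neg_smul (b*η) AE, sub_neg_eq_add]
      congr 2
      ring
    rw [he2, norm_smul, Real.norm_eq_abs]
    have habs : |(-(b*η))| = b * |η| := by
      rw [abs_neg, abs_mul, abs_of_pos hb]
    rw [habs]
    have hηρ : |η| ≤ ρ := abs_le.mpr ⟨hη.1, hη.2⟩
    show b * |η| * devE k ≤ 1/(2*α k)
    calc b * |η| * devE k ≤ b * ρ * devE k := by
          apply mul_le_mul_of_nonneg_right _ (norm_nonneg _)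
          exact mul_le_mul_of_nonneg_left hηρ hb.le
      _ ≤ u k := le_add_of_nonneg_left (mul_nonneg hb.le (hsSupnn k))
      _ ≤ 1/(2*α k) := hαb k hk
end
end

section
/- For every a > 0 and every x̃ ∈ ℝⁿ: ∫_{2W} J(x̃ + a φ(θ)) g(θ) φ(θ) dθ = 2^{n−1} ∫_W J(x̃ + a φ(θ)) g(θ) φ(θ) dθ, where W := (0, 2π) × (0, π)^{n−2} and 2W := (0, 4π) × (0, 2π)^{n−2}. -/
open MeasureTheory Real Set Filter

noncomputable section

section AuxSec17


variable {d : ℕ} {V : Type*} [NormedAddCommGroup V] [NormedSpace ℝ V]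

def mybox (d : ℕ) (l u : Fin d → ℝ) : Set (EuclideanSpace ℝ (Fin d)) :=
  {θ | ∀ i, θ i ∈ Set.Ioo (l i) (u i)}

def dmap (d : ℕ) (σ : Fin d → Prop) [DecidablePred σ] (c : Fin d → ℝ) :
    EuclideanSpace ℝ (Fin d) → EuclideanSpace ℝ (Fin d) :=
  fun θ => WithLp.toLp 2 fun i => (if σ i then -(θ i) else θ i) + c i

variable (σ : Fin d → Prop) [DecidablePred σ] (c : Fin d → ℝ)

lemma coord_continuous (i : Fin d) : Continuous fun θ : EuclideanSpace ℝ (Fin d) => θ i :=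
  (continuous_apply i).comp (PiLp.continuousLinearEquiv 2 ℝ _).continuous

lemma dmap_eq :
    dmap d σ c = (fun v => v + (show EuclideanSpace ℝ (Fin d) from WithLp.toLp 2 c)) ∘
      (LinearIsometryEquiv.piLpCongrRight 2 fun i =>
        if σ i then LinearIsometryEquiv.neg ℝ else LinearIsometryEquiv.refl ℝ ℝ) := by
  funext θ
  ext i
  simp only [Function.comp_apply, LinearIsometryEquiv.piLpCongrRight_apply, dmap]
  have : ∀ (v w : EuclideanSpace ℝ (Fin d)), (v + w) i = v i + w i := fun _ _ => rfl
  rw [this]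
  have h2 : (WithLp.toLp 2 fun j =>
      (if σ j then LinearIsometryEquiv.neg ℝ else LinearIsometryEquiv.refl ℝ ℝ) (θ j)) i
      = (if σ i then LinearIsometryEquiv.neg ℝ else LinearIsometryEquiv.refl ℝ ℝ) (θ i) := rfl
  rw [h2]
  by_cases h : σ i <;> simp [h]

lemma dmap_measurePreserving : MeasurePreserving (dmap d σ c) volume volume := by
  rw [dmap_eq]
  exact (measurePreserving_add_right volume _).comp (LinearIsometryEquiv.measurePreserving _)

lemma dmap_measurableEmbedding : MeasurableEmbedding (dmap d σ c) := by
  rw [dmap_eq]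
  exact (MeasurableEquiv.addRight _).measurableEmbedding.comp
    ((LinearIsometryEquiv.piLpCongrRight 2 fun i =>
        if σ i then LinearIsometryEquiv.neg ℝ else LinearIsometryEquiv.refl ℝ ℝ).toHomeomorph.toMeasurableEquiv.measurableEmbedding)

lemma dmap_key (f : EuclideanSpace ℝ (Fin d) → V)
    (hfinv : ∀ θ, f (dmap d σ c θ) = f θ) (s t : Set (EuclideanSpace ℝ (Fin d)))
    (hst : dmap d σ c ⁻¹' s = t) :
    ∫ θ in s, f θ = ∫ θ in t, f θ := by
  calc ∫ θ in s, f θ = ∫ θ in dmap d σ c ⁻¹' s, f (dmap d σ c θ) :=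
        ((dmap_measurePreserving σ c).setIntegral_preimage_emb
          (dmap_measurableEmbedding σ c) f s).symm
    _ = ∫ θ in t, f θ := by rw [hst]; simp only [hfinv]

lemma dmap_preimage_box (l u : Fin d → ℝ) :
    dmap d σ c ⁻¹' mybox d l u =
      mybox d (fun i => if σ i then c i - u i else l i - c i)
        (fun i => if σ i then c i - l i else u i - c i) := by
  ext θ
  simp only [mybox, mem_preimage, mem_setOf_eq, dmap, mem_Ioo]
  constructor <;> intro h i <;> have hi := h i <;> by_cases hs : σ i <;>
    simp only [hs, if_true, if_false] at hi ⊢ <;>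
    exact ⟨by linarith [hi.1, hi.2], by linarith [hi.1, hi.2]⟩

lemma mybox_isOpen (l u : Fin d → ℝ) : IsOpen (mybox d l u) := by
  have : mybox d l u = ⋂ i, (fun θ : EuclideanSpace ℝ (Fin d) => θ i) ⁻¹' Ioo (l i) (u i) := by
    ext θ; simp [mybox, mem_iInter]
  rw [this]
  exact isOpen_iInter_of_finite fun i => (isOpen_Ioo).preimage (coord_continuous i)

lemma mybox_measurableSet (l u : Fin d → ℝ) : MeasurableSet (mybox d l u) :=
  (mybox_isOpen l u).measurableSet

lemma mybox_integrableOn (l u : Fin d → ℝ) {f : EuclideanSpace ℝ (Fin d) → V}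
    (hf : Continuous f) : IntegrableOn f (mybox d l u) volume := by
  set K : Set (EuclideanSpace ℝ (Fin d)) := {θ | ∀ i, θ i ∈ Icc (l i) (u i)} with hK
  have hsub : mybox d l u ⊆ K := fun θ hθ i => Ioo_subset_Icc_self (hθ i)
  have hclosed : IsClosed K := by
    have : K = ⋂ i, (fun θ : EuclideanSpace ℝ (Fin d) => θ i) ⁻¹' Icc (l i) (u i) := by
      ext θ; simp [hK, mem_iInter]
    rw [this]
    exact isClosed_iInter fun i => isClosed_Icc.preimage (coord_continuous i)
  have hbdd : K ⊆ Metric.closedBall 0 (Real.sqrt (∑ i, (|l i| + |u i|) ^ 2)) := by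
    intro θ hθ
    rw [Metric.mem_closedBall, dist_zero_right, EuclideanSpace.norm_eq]
    apply Real.sqrt_le_sqrt
    apply Finset.sum_le_sum
    intro i _
    have h1 := (hθ i).1
    have h2 := (hθ i).2
    have : ‖θ i‖ ≤ |l i| + |u i| := by
      rw [Real.norm_eq_abs]
      rcases abs_cases (θ i) with ⟨he, _⟩ | ⟨he, _⟩ <;> rcases abs_cases (l i) with ⟨hl, _⟩ | ⟨hl, _⟩ <;>
        rcases abs_cases (u i) with ⟨hu, _⟩ | ⟨hu, _⟩ <;> linarith
    exact pow_le_pow_left₀ (norm_nonneg _) this 2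
  have hcomp : IsCompact K :=
    (isCompact_closedBall _ _).of_isClosed_subset hclosed hbdd
  exact (hf.continuousOn.integrableOn_compact hcomp).mono_set hsub

lemma hyperplane_null (i₀ : Fin d) (m : ℝ) :
    volume {θ : EuclideanSpace ℝ (Fin d) | θ i₀ = m} = 0 := by
  have hmeas : MeasurableSet {g : Fin d → ℝ | g i₀ = m} := by
    have : {g : Fin d → ℝ | g i₀ = m} = (fun g : Fin d → ℝ => g i₀) ⁻¹' {m} := rfl
    rw [this]
    exact (measurable_pi_apply i₀) (measurableSet_singleton m)
  have := (EuclideanSpace.volume_preserving_symm_measurableEquiv_toLp (ι := Fin d)).measure_preimage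
    hmeas.nullMeasurableSet
  have h2 : (MeasurableEquiv.toLp 2 (Fin d → ℝ)).symm ⁻¹' {g : Fin d → ℝ | g i₀ = m}
      = {θ : EuclideanSpace ℝ (Fin d) | θ i₀ = m} := rfl
  rw [h2] at this
  rw [this, volume_pi, Measure.pi_hyperplane]

lemma box_split {f : EuclideanSpace ℝ (Fin d) → V} (hf : Continuous f)
    (i₀ : Fin d) (m : ℝ) (l u : Fin d → ℝ) (h1 : l i₀ ≤ m) (h2 : m ≤ u i₀) :
    ∫ θ in mybox d l u, f θ =
      (∫ θ in mybox d l (Function.update u i₀ m), f θ) +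
        ∫ θ in mybox d (Function.update l i₀ m) u, f θ := by
  set b₁ := mybox d l (Function.update u i₀ m) with hb₁
  set b₂ := mybox d (Function.update l i₀ m) u with hb₂
  have hsub₁ : b₁ ⊆ mybox d l u := by
    intro θ hθ i
    have := hθ i
    rcases eq_or_ne i i₀ with h | h
    · subst h; simp only [Function.update_self] at this
      exact ⟨this.1, lt_of_lt_of_le this.2 h2⟩
    · simp only [Function.update_of_ne h] at this; exact this
  have hsub₂ : b₂ ⊆ mybox d l u := by
    intro θ hθ i
    have := hθ i
    rcases eq_or_ne i i₀ with h | h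
    · subst h; simp only [Function.update_self] at this
      exact ⟨lt_of_le_of_lt h1 this.1, this.2⟩
    · simp only [Function.update_of_ne h] at this; exact this
  have hdiff : mybox d l u \ (b₁ ∪ b₂) ⊆ {θ : EuclideanSpace ℝ (Fin d) | θ i₀ = m} := by
    intro θ ⟨hθ, hn⟩
    simp only [mem_union, not_or] at hn
    obtain ⟨hn₁, hn₂⟩ := hn
    by_contra hne
    rcases lt_or_gt_of_ne hne with hlt | hgt
    · exact hn₁ (fun i => by
        rcases eq_or_ne i i₀ with h | h
        · subst h; simp only [Function.update_self]; exact ⟨(hθ i).1, hlt⟩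
        · simp only [Function.update_of_ne h]; exact hθ i)
    · exact hn₂ (fun i => by
        rcases eq_or_ne i i₀ with h | h
        · subst h; simp only [Function.update_self]; exact ⟨hgt, (hθ i).2⟩
        · simp only [Function.update_of_ne h]; exact hθ i)
  have hae : mybox d l u =ᵐ[volume] ((b₁ ∪ b₂ : Set (EuclideanSpace ℝ (Fin d)))) := by
    rw [MeasureTheory.ae_eq_set]
    constructor
    · exact measure_mono_null hdiff (hyperplane_null i₀ m)
    · have : (b₁ ∪ b₂) \ mybox d l u = ∅ := by
        rw [diff_eq_empty]; exact union_subset hsub₁ hsub₂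
      rw [this]; exact measure_empty
  have hdisj : Disjoint b₁ b₂ := by
    rw [Set.disjoint_left]
    intro θ hθ₁ hθ₂
    have e1 := hθ₁ i₀
    have e2 := hθ₂ i₀
    simp only [Function.update_self] at e1 e2
    exact absurd (e1.2.trans e2.1) (lt_irrefl _)
  rw [setIntegral_congr_set hae,
    setIntegral_union hdisj (mybox_measurableSet _ _) (mybox_integrableOn _ _ hf)
      (mybox_integrableOn _ _ hf)]

lemma dmap_box_key (σ : Fin d → Prop) [DecidablePred σ] (c : Fin d → ℝ)
    (f : EuclideanSpace ℝ (Fin d) → V)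
    (hfinv : ∀ θ, f (dmap d σ c θ) = f θ) (l u l' u' : Fin d → ℝ)
    (hL : ∀ i, (if σ i then c i - u i else l i - c i) = l' i)
    (hU : ∀ i, (if σ i then c i - l i else u i - c i) = u' i) :
    ∫ θ in mybox d l u, f θ = ∫ θ in mybox d l' u', f θ :=
  dmap_key σ c f hfinv _ _
    (by rw [dmap_preimage_box]; exact congrArg₂ (mybox d) (funext hL) (funext hU))

def uFun (d k : ℕ) : Fin d → ℝ :=
  fun i => if (i : ℕ) = 0 then 4 * π else if (i : ℕ) < k then π else 2 * π

def shiftC (d : ℕ) (k : ℤ) : Fin d → ℝ := fun i => if (i : ℕ) = 0 then (k : ℝ) * (2 * π) else 0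

def smapσ (d : ℕ) (j : ℕ) : Fin d → Prop := fun i => 1 ≤ (i : ℕ) ∧ (i : ℕ) ≤ j

def smapC (d : ℕ) (j : ℕ) : Fin d → ℝ := fun i =>
  if (i : ℕ) = 0 then π else if (i : ℕ) < j then π else if (i : ℕ) = j then 2 * π else 0

instance (j : ℕ) : DecidablePred (smapσ d j) := fun i => by unfold smapσ; infer_instance

theorem core (hd : 1 ≤ d) (f : EuclideanSpace ℝ (Fin d) → V) (hf : Continuous f)
    (hper : ∀ (k : ℤ) θ, f (dmap d (fun _ => False) (shiftC d k) θ) = f θ)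
    (hrefl : ∀ j : ℕ, 1 ≤ j → j < d → ∀ θ, f (dmap d (smapσ d j) (smapC d j) θ) = f θ) :
    ∫ θ in mybox d (fun _ => 0) (uFun d 1), f θ =
      (2 : ℝ) ^ d • ∫ θ in mybox d (fun _ => 0)
        (fun i : Fin d => if (i : ℕ) = 0 then 2 * π else π), f θ := by
  have hπ := Real.pi_pos
  set i0 : Fin d := ⟨0, hd⟩ with hi0
  have hi0v : (i0 : ℕ) = 0 := rfl
  have step : ∀ k : ℕ, 1 ≤ k → k < d →
      (∫ θ in mybox d (fun _ => 0) (uFun d k), f θ) =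
        (2 : ℝ) • ∫ θ in mybox d (fun _ => 0) (uFun d (k + 1)), f θ := by
    intro k hk1 hkd
    set ik : Fin d := ⟨k, hkd⟩ with hik
    have hikv : (ik : ℕ) = k := rfl
    set l' : Fin d → ℝ := fun i => if (i : ℕ) = 0 then -π else 0 with hl'
    set u' : Fin d → ℝ := fun i => if (i : ℕ) = 0 then 3 * π
      else if (i : ℕ) < k + 1 then π else 2 * π with hu'
    set u'0 : Fin d → ℝ := fun i => if (i : ℕ) = 0 then 0
      else if (i : ℕ) < k + 1 then π else 2 * π with hu'0
    set lD : Fin d → ℝ := fun i => if (i : ℕ) = 0 then 3 * π else 0 with hlD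
    -- (1) split coordinate k at π
    have e1 : Function.update (uFun d k) ik π = uFun d (k + 1) := by
      funext i
      simp only [Function.update_apply, uFun, Fin.ext_iff, hikv]
      split_ifs <;> first | omega | ring
    have s1 := box_split (f := f) hf ik π (fun _ => 0) (uFun d k)
      (le_of_lt hπ) (by simp only [uFun, hikv]; split_ifs <;> first | omega | linarith)
    rw [e1] at s1
    -- (2) reflection step
    have s2 := dmap_box_key (smapσ d k) (smapC d k) f (hrefl k hk1 hkd)
      (Function.update (fun _ => 0) ik π) (uFun d k) l' u'
      (fun i => by
        simp only [smapσ, smapC, uFun, Function.update_apply, hl', Fin.ext_iff, hikv]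
        split_ifs <;> first | omega | ring)
      (fun i => by
        simp only [smapσ, smapC, uFun, Function.update_apply, hu', Fin.ext_iff, hikv]
        split_ifs <;> first | omega | ring)
    -- (3) split coordinate 0 of (l', u') at 0
    have e3a : Function.update l' i0 0 = (fun _ : Fin d => (0:ℝ)) := by
      funext i
      simp only [Function.update_apply, hl', Fin.ext_iff, hi0v]
      split_ifs <;> first | omega | ring
    have e3b : Function.update u' i0 0 = u'0 := by
      funext i
      simp only [Function.update_apply, hu', hu'0, Fin.ext_iff, hi0v]
      split_ifs <;> first | omega | ring
    have s3 := box_split (f := f) hf i0 0 l' u'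
      (by simp only [hl', hi0v]; split_ifs <;> first | omega | linarith)
      (by simp only [hu', hi0v]; split_ifs <;> first | omega | linarith)
    rw [e3a, e3b] at s3
    -- (4) shift (-π,0) part to (3π,4π)
    have s4 := dmap_box_key (fun _ => False) (shiftC d 2) f (hper 2)
      lD (uFun d (k + 1)) l' u'0
      (fun i => by
        simp only [shiftC, hlD, hl', uFun, if_false]
        split_ifs <;> first | omega | (push_cast; ring))
      (fun i => by
        simp only [shiftC, hu'0, uFun, if_false]
        split_ifs <;> first | omega | (push_cast; ring))
    -- (5) merge to (0, u (k+1))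
    have e5a : Function.update (uFun d (k + 1)) i0 (3 * π) = u' := by
      funext i
      simp only [Function.update_apply, uFun, hu', Fin.ext_iff, hi0v]
      split_ifs <;> first | omega | ring
    have e5b : Function.update (fun _ : Fin d => (0:ℝ)) i0 (3 * π) = lD := by
      funext i
      simp only [Function.update_apply, hlD, Fin.ext_iff, hi0v]
    have s5 := box_split (f := f) hf i0 (3 * π) (fun _ => 0) (uFun d (k + 1))
      (by positivity) (by simp only [uFun, hi0v]; split_ifs <;> first | omega | linarith)
    rw [e5a, e5b] at s5
    rw [s1, s2, s3, ← s4, s5, two_smul]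
    abel
  -- induction
  have main : ∀ k : ℕ, 1 ≤ k → k ≤ d →
      (∫ θ in mybox d (fun _ => 0) (uFun d 1), f θ) =
        (2 : ℝ) ^ (k - 1) • ∫ θ in mybox d (fun _ => 0) (uFun d k), f θ := by
    intro k hk1
    induction k, hk1 using Nat.le_induction with
    | base => intro _; simp
    | succ m hm ih =>
      intro hmd
      rw [ih (by omega), step m hm (by omega), smul_smul]
      congr 1
      rw [show m + 1 - 1 = (m - 1) + 1 by omega, pow_succ]
  have hlast := main d hd le_rfl
  -- final split of coordinate 0 at 2π
  have e6a : Function.update (uFun d d) i0 (2 * π) =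
      (fun i : Fin d => if (i : ℕ) = 0 then 2 * π else π) := by
    funext i
    have hlt : (i : ℕ) < d := i.isLt
    simp only [Function.update_apply, uFun, Fin.ext_iff, hi0v]
    split_ifs <;> first | omega | ring
  have s6 := box_split (f := f) hf i0 (2 * π) (fun _ => 0) (uFun d d)
    (by positivity) (by simp only [uFun, hi0v]; split_ifs <;> first | omega | linarith)
  rw [e6a] at s6
  have s7 := dmap_box_key (fun _ => False) (shiftC d 1) f (hper 1)
    (Function.update (fun _ : Fin d => (0:ℝ)) i0 (2 * π)) (uFun d d)
    (fun _ => 0) (fun i : Fin d => if (i : ℕ) = 0 then 2 * π else π)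
    (fun i => by
      have hlt : (i : ℕ) < d := i.isLt
      simp only [shiftC, Function.update_apply, uFun, Fin.ext_iff, hi0v, if_false]
      split_ifs <;> first | omega | (push_cast; ring))
    (fun i => by
      have hlt : (i : ℕ) < d := i.isLt
      simp only [shiftC, Function.update_apply, uFun, Fin.ext_iff, hi0v, if_false]
      split_ifs <;> first | omega | (push_cast; ring))
  rw [hlast, s6, s7, ← two_smul ℝ, smul_smul]
  congr 1
  rw [← pow_succ]
  congr 1
  omega


end AuxSec17

section Trig17
lemma prodsin_eq (n : ℕ) (ξ ξ' : ℕ → ℝ) (j : ℕ)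
    (hsin : ∀ i, 1 ≤ i → i < n - 1 → sin (ξ' i) = (if i = j then -1 else 1) * sin (ξ i))
    (m : ℕ) (hm : 1 ≤ m) :
    ∏ i ∈ Finset.Ico m (n - 1), Real.sin (ξ' i) =
      (if j ∈ Finset.Ico m (n - 1) then (-1 : ℝ) else 1) *
        ∏ i ∈ Finset.Ico m (n - 1), Real.sin (ξ i) := by
  rw [Finset.prod_congr rfl (fun i hi => hsin i (le_trans hm (Finset.mem_Ico.mp hi).1)
    (Finset.mem_Ico.mp hi).2), Finset.prod_mul_distrib]
  congr 1
  exact Finset.prod_ite_eq' _ j (fun _ => (-1 : ℝ))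

lemma sph_invariant (n : ℕ) (ξ ξ' : ℕ → ℝ) (j : ℕ) (hj1 : 1 ≤ j) (hj2 : j < n - 1)
    (hcos0 : cos (ξ' 0) = -cos (ξ 0)) (hsin0 : sin (ξ' 0) = -sin (ξ 0))
    (hsin : ∀ i, 1 ≤ i → i < n - 1 → sin (ξ' i) = (if i = j then -1 else 1) * sin (ξ i))
    (hcos : ∀ i, 1 ≤ i → i < n - 1 → cos (ξ' i) = (if i < j then -1 else 1) * cos (ξ i)) :
    sphParam n ξ' = sphParam n ξ := by
  ext m
  unfold sphParam
  simp only [WithLp.ofLp_toLp]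
  have hj : j ∈ Finset.Ico 1 (n - 1) := Finset.mem_Ico.mpr ⟨hj1, hj2⟩
  by_cases h0 : (m : ℕ) = 0
  · rw [if_pos h0, if_pos h0, hcos0, prodsin_eq n ξ ξ' j hsin 1 le_rfl, if_pos hj]; ring
  · by_cases h1 : (m : ℕ) = 1
    · rw [if_neg h0, if_neg h0, if_pos h1, if_pos h1, hsin0,
        prodsin_eq n ξ ξ' j hsin 1 le_rfl, if_pos hj]; ring
    · rw [if_neg h0, if_neg h0, if_neg h1, if_neg h1]
      have h2 : 2 ≤ (m : ℕ) := by omega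
      have hmn : (m : ℕ) < n := m.isLt
      have hi1 : 1 ≤ (m : ℕ) - 1 := by omega
      have hi2 : (m : ℕ) - 1 < n - 1 := by omega
      rw [hcos _ hi1 hi2, prodsin_eq n ξ ξ' j hsin (m : ℕ) (by omega)]
      have hiff : j ∈ Finset.Ico (m : ℕ) (n - 1) ↔ (m : ℕ) - 1 < j := by
        rw [Finset.mem_Ico]; omega
      by_cases hc : (m : ℕ) - 1 < j
      · rw [if_pos hc, if_pos (hiff.mpr hc)]; ring
      · rw [if_neg hc, if_neg (fun hmem => hc (hiff.mp hmem))]; ring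

lemma sph_shift (n : ℕ) (ξ ξ' : ℕ → ℝ)
    (hcos0 : cos (ξ' 0) = cos (ξ 0)) (hsin0 : sin (ξ' 0) = sin (ξ 0))
    (heq : ∀ i, 1 ≤ i → i < n - 1 → ξ' i = ξ i) :
    sphParam n ξ' = sphParam n ξ := by
  ext m
  unfold sphParam
  simp only [WithLp.ofLp_toLp]
  have hprod : ∀ m' : ℕ, 1 ≤ m' → ∏ i ∈ Finset.Ico m' (n - 1), Real.sin (ξ' i) =
      ∏ i ∈ Finset.Ico m' (n - 1), Real.sin (ξ i) :=
    fun m' hm' => Finset.prod_congr rfl fun i hi => by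
      rw [heq i (le_trans hm' (Finset.mem_Ico.mp hi).1) (Finset.mem_Ico.mp hi).2]
  by_cases h0 : (m : ℕ) = 0
  · rw [if_pos h0, if_pos h0, hcos0, hprod 1 le_rfl]
  · by_cases h1 : (m : ℕ) = 1
    · rw [if_neg h0, if_neg h0, if_pos h1, if_pos h1, hsin0, hprod 1 le_rfl]
    · rw [if_neg h0, if_neg h0, if_neg h1, if_neg h1,
        heq _ (by omega) (by have := m.isLt; omega), hprod (m : ℕ) (by omega)]

lemma gram_invariant (n : ℕ) (ξ ξ' : ℕ → ℝ)
    (habs : ∀ i, 1 ≤ i → i < n - 1 → |sin (ξ' i)| = |sin (ξ i)|) :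
    gramG n ξ' = gramG n ξ :=
  Finset.prod_congr rfl fun i hi => by
    rw [habs i (Finset.mem_Ico.mp hi).1 (Finset.mem_Ico.mp hi).2]

end Trig17


lemma padTo_lt {d : ℕ} (z : EuclideanSpace ℝ (Fin d)) (j : ℕ) (h : j < d) :
    padTo d z j = z ⟨j, h⟩ := by
  unfold padTo; rw [dif_pos h]

theorem statement17' (n : ℕ) (hn : 2 ≤ n) (J : EuclideanSpace ℝ (Fin n) → ℝ)
    (hJ : ContDiff ℝ (⊤ : ℕ∞) J) (a : ℝ) (ha : 0 < a) (x : EuclideanSpace ℝ (Fin n)) :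
    (∫ θ in W2set n,
        (J (x + a • sphParam n (padTo (n-1) θ)) * gramG n (padTo (n-1) θ)) •
          sphParam n (padTo (n-1) θ)) =
      ((2:ℝ) ^ (n-1)) • ∫ θ in Wset n,
        (J (x + a • sphParam n (padTo (n-1) θ)) * gramG n (padTo (n-1) θ)) •
          sphParam n (padTo (n-1) θ) := by
  have hd : 1 ≤ n - 1 := by omega
  -- continuity of the padded angle coordinates
  have hpadc : ∀ j : ℕ, Continuous fun θ : EuclideanSpace ℝ (Fin (n-1)) => padTo (n-1) θ j := by
    intro j
    by_cases h : j < n - 1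
    · have : (fun θ : EuclideanSpace ℝ (Fin (n-1)) => padTo (n-1) θ j)
          = fun θ => θ ⟨j, h⟩ := funext fun θ => padTo_lt θ j h
      rw [this]; exact coord_continuous _
    · have : (fun θ : EuclideanSpace ℝ (Fin (n-1)) => padTo (n-1) θ j)
          = fun _ => (0:ℝ) := funext fun θ => by unfold padTo; rw [dif_neg h]
      rw [this]; exact continuous_const
  have hsphc : Continuous fun θ : EuclideanSpace ℝ (Fin (n-1)) =>
      sphParam n (padTo (n-1) θ) := by
    have hcomp : Continuous fun θ : EuclideanSpace ℝ (Fin (n-1)) =>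
        (fun m : Fin n =>
          if (m : ℕ) = 0 then
            Real.cos (padTo (n-1) θ 0) * ∏ j ∈ Finset.Ico 1 (n - 1), Real.sin (padTo (n-1) θ j)
          else if (m : ℕ) = 1 then
            Real.sin (padTo (n-1) θ 0) * ∏ j ∈ Finset.Ico 1 (n - 1), Real.sin (padTo (n-1) θ j)
          else Real.cos (padTo (n-1) θ ((m : ℕ) - 1)) *
            ∏ j ∈ Finset.Ico (m : ℕ) (n - 1), Real.sin (padTo (n-1) θ j)) := by
      apply continuous_pi
      intro m
      by_cases h0 : (m : ℕ) = 0
      · simp only [if_pos h0]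
        exact (Real.continuous_cos.comp (hpadc 0)).mul
          (continuous_finset_prod _ fun j _ => Real.continuous_sin.comp (hpadc j))
      · by_cases h1 : (m : ℕ) = 1
        · simp only [if_neg h0, if_pos h1]
          exact (Real.continuous_sin.comp (hpadc 0)).mul
            (continuous_finset_prod _ fun j _ => Real.continuous_sin.comp (hpadc j))
        · simp only [if_neg h0, if_neg h1]
          exact (Real.continuous_cos.comp (hpadc _)).mul
            (continuous_finset_prod _ fun j _ => Real.continuous_sin.comp (hpadc j))
    exact (PiLp.continuousLinearEquiv 2 ℝ (fun _ : Fin n => ℝ)).symm.continuous.comp hcomp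
  have hgramc : Continuous fun θ : EuclideanSpace ℝ (Fin (n-1)) => gramG n (padTo (n-1) θ) := by
    unfold gramG
    exact continuous_finset_prod _ fun j _ => ((Real.continuous_sin.comp (hpadc j)).abs).pow j
  have hFc : Continuous fun θ : EuclideanSpace ℝ (Fin (n-1)) =>
      (J (x + a • sphParam n (padTo (n-1) θ)) * gramG n (padTo (n-1) θ)) •
        sphParam n (padTo (n-1) θ) :=
    ((hJ.continuous.comp (continuous_const.add (hsphc.const_smul a))).mul hgramc).smul hsphc
  -- periodicity in the first angle
  have hper : ∀ (k : ℤ) (θ : EuclideanSpace ℝ (Fin (n-1))),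
      (fun θ => (J (x + a • sphParam n (padTo (n-1) θ)) * gramG n (padTo (n-1) θ)) •
        sphParam n (padTo (n-1) θ)) (dmap (n-1) (fun _ => False) (shiftC (n-1) k) θ) =
      (fun θ => (J (x + a • sphParam n (padTo (n-1) θ)) * gramG n (padTo (n-1) θ)) •
        sphParam n (padTo (n-1) θ)) θ := by
    intro k θ
    have h0 : padTo (n-1) (dmap (n-1) (fun _ => False) (shiftC (n-1) k) θ) 0
        = θ ⟨0, hd⟩ + (k : ℝ) * (2 * π) := by
      rw [padTo_lt _ 0 hd]
      show (if False then -(θ ⟨0, hd⟩) else θ ⟨0, hd⟩) + shiftC (n-1) k ⟨0, hd⟩ = _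
      simp [shiftC]
    have hi : ∀ i : ℕ, 1 ≤ i → i < n - 1 →
        padTo (n-1) (dmap (n-1) (fun _ => False) (shiftC (n-1) k) θ) i = padTo (n-1) θ i := by
      intro i h1 h2
      rw [padTo_lt _ i h2, padTo_lt _ i h2]
      show (if False then -(θ ⟨i, h2⟩) else θ ⟨i, h2⟩) + shiftC (n-1) k ⟨i, h2⟩ = θ ⟨i, h2⟩
      have : i ≠ 0 := by omega
      simp [shiftC, this]
    have hsph : sphParam n (padTo (n-1) (dmap (n-1) (fun _ => False) (shiftC (n-1) k) θ))
        = sphParam n (padTo (n-1) θ) := by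
      apply sph_shift
      · rw [h0, padTo_lt _ 0 hd]; exact Real.cos_add_int_mul_two_pi _ k
      · rw [h0, padTo_lt _ 0 hd]; exact Real.sin_add_int_mul_two_pi _ k
      · exact fun i h1 h2 => hi i h1 h2
    have hgram : gramG n (padTo (n-1) (dmap (n-1) (fun _ => False) (shiftC (n-1) k) θ))
        = gramG n (padTo (n-1) θ) :=
      gram_invariant n _ _ fun i h1 h2 => by rw [hi i h1 h2]
    simp only [hsph, hgram]
  -- reflection invariance
  have hrefl : ∀ j : ℕ, 1 ≤ j → j < n - 1 → ∀ θ : EuclideanSpace ℝ (Fin (n-1)),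
      (fun θ => (J (x + a • sphParam n (padTo (n-1) θ)) * gramG n (padTo (n-1) θ)) •
        sphParam n (padTo (n-1) θ)) (dmap (n-1) (smapσ (n-1) j) (smapC (n-1) j) θ) =
      (fun θ => (J (x + a • sphParam n (padTo (n-1) θ)) * gramG n (padTo (n-1) θ)) •
        sphParam n (padTo (n-1) θ)) θ := by
    intro j hj1 hjd θ
    have hang : ∀ (i : ℕ) (h : i < n - 1),
        padTo (n-1) (dmap (n-1) (smapσ (n-1) j) (smapC (n-1) j) θ) i =
          (if 1 ≤ i ∧ i ≤ j then -(θ ⟨i, h⟩) else θ ⟨i, h⟩) +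
            (if i = 0 then π else if i < j then π else if i = j then 2 * π else 0) := by
      intro i h
      rw [padTo_lt _ i h]
      show (if smapσ (n-1) j ⟨i, h⟩ then -(θ ⟨i, h⟩) else θ ⟨i, h⟩) + smapC (n-1) j ⟨i, h⟩ = _
      rfl
    have h0 : padTo (n-1) (dmap (n-1) (smapσ (n-1) j) (smapC (n-1) j) θ) 0
        = θ ⟨0, hd⟩ + π := by
      rw [hang 0 hd, if_neg (by omega), if_pos rfl]
    have hsin : ∀ i : ℕ, 1 ≤ i → i < n - 1 →
        Real.sin (padTo (n-1) (dmap (n-1) (smapσ (n-1) j) (smapC (n-1) j) θ) i) =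
          (if i = j then -1 else 1) * Real.sin (padTo (n-1) θ i) := by
      intro i h1 h2
      rw [hang i h2, padTo_lt _ i h2]
      rcases lt_trichotomy i j with hc | hc | hc
      · rw [if_pos ⟨h1, hc.le⟩, if_neg (by omega), if_pos hc,
          show -(θ ⟨i, h2⟩) + π = π - θ ⟨i, h2⟩ by ring, Real.sin_pi_sub, if_neg (by omega)]
        ring
      · rw [if_pos ⟨h1, hc.le⟩, if_neg (by omega), if_neg (by omega), if_pos hc,
          show -(θ ⟨i, h2⟩) + 2 * π = 2 * π - θ ⟨i, h2⟩ by ring, Real.sin_two_pi_sub,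
          if_pos hc]
        ring
      · rw [if_neg (by omega), if_neg (by omega), if_neg (by omega), if_neg (by omega),
          add_zero, if_neg (by omega), one_mul]
    have hcos : ∀ i : ℕ, 1 ≤ i → i < n - 1 →
        Real.cos (padTo (n-1) (dmap (n-1) (smapσ (n-1) j) (smapC (n-1) j) θ) i) =
          (if i < j then -1 else 1) * Real.cos (padTo (n-1) θ i) := by
      intro i h1 h2
      rw [hang i h2, padTo_lt _ i h2]
      rcases lt_trichotomy i j with hc | hc | hc
      · rw [if_pos ⟨h1, hc.le⟩, if_neg (by omega), if_pos hc,
          show -(θ ⟨i, h2⟩) + π = π - θ ⟨i, h2⟩ by ring, Real.cos_pi_sub, if_pos hc]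
        ring
      · rw [if_pos ⟨h1, hc.le⟩, if_neg (by omega), if_neg (by omega), if_pos hc,
          show -(θ ⟨i, h2⟩) + 2 * π = 2 * π - θ ⟨i, h2⟩ by ring, Real.cos_two_pi_sub,
          if_neg (by omega), one_mul]
      · rw [if_neg (by omega), if_neg (by omega), if_neg (by omega), if_neg (by omega),
          add_zero, if_neg (by omega), one_mul]
    have hsph : sphParam n (padTo (n-1) (dmap (n-1) (smapσ (n-1) j) (smapC (n-1) j) θ))
        = sphParam n (padTo (n-1) θ) := by
      apply sph_invariant n _ _ j hj1 hjd
      · rw [h0, padTo_lt _ 0 hd, Real.cos_add_pi]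
      · rw [h0, padTo_lt _ 0 hd, Real.sin_add_pi]
      · exact hsin
      · exact hcos
    have hgram : gramG n (padTo (n-1) (dmap (n-1) (smapσ (n-1) j) (smapC (n-1) j) θ))
        = gramG n (padTo (n-1) θ) := by
      apply gram_invariant
      intro i h1 h2
      rw [hsin i h1 h2]
      split_ifs <;> simp [abs_mul]
    simp only [hsph, hgram]
  have hW2 : W2set n = mybox (n-1) (fun _ => 0) (uFun (n-1) 1) := by
    apply Set.ext
    intro θ
    refine forall_congr' fun i => ?_
    by_cases h : (i : ℕ) = 0
    · simp [W2set, mybox, uFun, h]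
    · have h1 : ¬((i : ℕ) < 1) := by omega
      simp [W2set, mybox, uFun, h, h1]
  have hW : Wset n = mybox (n-1) (fun _ => 0)
      (fun i : Fin (n-1) => if (i : ℕ) = 0 then 2 * π else π) := rfl
  rw [hW2, hW]
  exact core hd _ hFc hper hrefl

/-- eq. (57): the integral over `2W` is `2^{n-1}` times the
integral over `W`. -/
theorem statement17 (n : ℕ) (hn : 2 ≤ n) (J : EuclideanSpace ℝ (Fin n) → ℝ)
    (hJ : ContDiff ℝ (⊤ : ℕ∞) J) (a : ℝ) (ha : 0 < a) (x : EuclideanSpace ℝ (Fin n)) :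
    (∫ θ in W2set n,
        (J (x + a • sphParam n (padTo (n-1) θ)) * gramG n (padTo (n-1) θ)) •
          sphParam n (padTo (n-1) θ)) =
      ((2:ℝ) ^ (n-1)) • ∫ θ in Wset n,
        (J (x + a • sphParam n (padTo (n-1) θ)) * gramG n (padTo (n-1) θ)) •
          sphParam n (padTo (n-1) θ) := statement17' n hn J hJ a ha x
end
end
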